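/- arXiv:1307.2808 — 5 statements merged into one kernel-verified Lean document; each statement's English description precedes it below -/
import Mathlib

section
/- Let j ≠ j' be two dangerous clients with r_j = r_{j'} = r, d_max(j) > 0, d_max(j') > 0, that do not conflict (i.e., d(j,j') > 6·max{d_av(j), d_av(j')}). Then d(j,j') ≥ d_max(j)/10 + d_max(j')/10. -/
/-!
Markov's inequality for the quantile function gives `q_j(r/2) ≤ 2 d_av(j)`, so if `j` and `j'`
do not conflict, each of them has at least half of its requirement `r` in facilities at distance
`< d(j,j')/3` from it. These two sets are disjoint. If `d_max(j) > (4/3) d(j,j')`, both lie in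
`F_j`, together with a facility at distance `d_max(j)` from `j`, and `y(F_j) = r` is exceeded.
Hence `d_max ≤ (4/3) d(j,j')` for both clients, which is more than enough.
-/

open scoped BigOperators

/-- A fractional solution to a fault-tolerant k-median instance: facilities `F`,
clients `C`, requirements `req`, fractional openings `y`, and for each client `j`
a set `Fj j` of the closest `req j` volume of facilities. -/
structure FracSol (X : Type*) [MetricSpace X] where
  F : Finset X
  C : Finset X
  req : X → ℕ
  y : X → ℝ
  Fj : X → Finset X
  req_pos : ∀ j ∈ C, 0 < req j
  y_pos : ∀ i ∈ F, 0 < y i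
  y_le_one : ∀ i ∈ F, y i ≤ 1
  Fj_sub : ∀ j ∈ C, Fj j ⊆ F
  Fj_vol : ∀ j ∈ C, ∑ i ∈ Fj j, y i = (req j : ℝ)
  Fj_closest : ∀ j ∈ C, ∀ i ∈ Fj j, ∀ i' ∈ F, i' ∉ Fj j → dist j i ≤ dist j i'

namespace FracSol

variable {X : Type*} [MetricSpace X]

/-- The quantile (generalized inverse CDF) function `q_j` of the distances from `j`
to the facilities of `F_j`, weighted by `y`: for `x ∈ (s_{l-1}, s_l]` it equals
`d(j, i_l)`, where facilities are sorted by distance to `j`. -/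
noncomputable def q (s : FracSol X) (j : X) (x : ℝ) : ℝ :=
  sInf {D : ℝ | x ≤ ∑ i ∈ (s.Fj j).filter (fun i => dist j i ≤ D), s.y i}

/-- `d_av^t(j) = ∫_{t-1}^{t} q_j(x) dx`. -/
noncomputable def davT (s : FracSol X) (j : X) (t : ℕ) : ℝ :=
  ∫ u in ((t : ℝ) - 1)..(t : ℝ), s.q j u

/-- `d_max^t(j) = q_j(t)`. -/
noncomputable def dmaxT (s : FracSol X) (j : X) (t : ℕ) : ℝ := s.q j (t : ℝ)

/-- `d_av(j) = (1/r_j) ∫_0^{r_j} q_j(x) dx`. -/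
noncomputable def dav (s : FracSol X) (j : X) : ℝ :=
  (1 / (s.req j : ℝ)) * ∫ u in (0 : ℝ)..((s.req j : ℝ)), s.q j u

/-- `d_max(j) = q_j(r_j)`, the maximum distance from `j` to `F_j`. -/
noncomputable def dmax (s : FracSol X) (j : X) : ℝ := s.q j ((s.req j : ℝ))

/-- `Ball(j, L) = {i ∈ F : d(i,j) ≤ L}`. -/
noncomputable def ball (s : FracSol X) (j : X) (L : ℝ) : Finset X :=
  s.F.filter (fun i => dist i j ≤ L)

/-- `B_j = Ball(j, d_max(j)/15)`. -/
noncomputable def Bset (s : FracSol X) (j : X) : Finset X := s.ball j (s.dmax j / 15)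

/-- `y(S) = ∑_{i ∈ S} y_i`. -/
noncomputable def vol (s : FracSol X) (S : Finset X) : ℝ := ∑ i ∈ S, s.y i

/-- A client `j` is dangerous if `d_max(j) ≥ 45 d_av^{r_j}(j)`. -/
def Dangerous (s : FracSol X) (j : X) : Prop :=
  j ∈ s.C ∧ 45 * s.davT j (s.req j) ≤ s.dmax j

/-- Two distinct dangerous clients conflict if they have the same requirement and
`d(j,j') ≤ 6 max{d_av(j), d_av(j')}`. -/
def Conflict (s : FracSol X) (j j' : X) : Prop :=
  j ≠ j' ∧ s.req j = s.req j' ∧ dist j j' ≤ 6 * max (s.dav j) (s.dav j')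

/-- `d_av(j, S) = (∑_{i∈S} d(j,i) y_i) / y(S)`. -/
noncomputable def davS (s : FracSol X) (j : X) (S : Finset X) : ℝ :=
  (∑ i ∈ S, dist j i * s.y i) / s.vol S

/-- Sum of the `r` smallest values among the multiset `{d(j,i) : i ∈ S}`. -/
noncomputable def kSmallestSum (j : X) (S : Finset X) (r : ℕ) : ℝ :=
  (((S.val.map fun i => dist j i).sort (· ≤ ·)).take r).sum

end FracSol

theorem MonotoneOn.sub_mul_le_intervalIntegral {f : ℝ → ℝ} {a t b : ℝ} (hat : a ≤ t)
    (htb : t ≤ b) (hf : MonotoneOn f (Set.Icc a b)) (hf0 : ∀ x ∈ Set.Icc a b, 0 ≤ f x) :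
    (b - t) * f t ≤ ∫ x in a..b, f x := by
  have hint {u v : ℝ} (hu : a ≤ u) (huv : u ≤ v) (hv : v ≤ b) :
      IntervalIntegrable f MeasureTheory.volume u v :=
    (hf.mono (by rw [Set.uIcc_of_le huv]; exact Set.Icc_subset_Icc hu hv)).intervalIntegrable
  have hhead : 0 ≤ ∫ x in a..t, f x :=
    intervalIntegral.integral_nonneg hat fun x hx => hf0 x ⟨hx.1, hx.2.trans htb⟩
  calc (b - t) * f t = ∫ _ in t..b, f t := by simp
    _ ≤ ∫ x in t..b, f x :=
        intervalIntegral.integral_mono_on htb intervalIntegrable_const (hint hat htb le_rfl)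
          fun x hx => hf ⟨hat, htb⟩ ⟨hat.trans hx.1, hx.2⟩ hx.1
    _ ≤ ∫ x in a..b, f x := by
        rw [← intervalIntegral.integral_add_adjacent_intervals (hint le_rfl hat htb)
          (hint hat htb le_rfl)]
        linarith

namespace FracSol

variable {X : Type*} [MetricSpace X] (s : FracSol X) {j : X}

theorem sum_filter_dist_le_eq_zero_of_neg {D : ℝ} (hD : D < 0) :
    ∑ i ∈ (s.Fj j).filter (fun i => dist j i ≤ D), s.y i = 0 := by
  rw [Finset.filter_false_of_mem fun i _ => not_le.mpr (hD.trans_le dist_nonneg),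
    Finset.sum_empty]

theorem bddBelow_setOf_le_sum_filter {x : ℝ} (hx : 0 < x) :
    BddBelow {D : ℝ | x ≤ ∑ i ∈ (s.Fj j).filter (fun i => dist j i ≤ D), s.y i} := by
  refine ⟨0, fun D hD => le_of_not_gt fun hD0 => ?_⟩
  rw [Set.mem_ofPred_eq, s.sum_filter_dist_le_eq_zero_of_neg hD0] at hD
  linarith

theorem nonempty_setOf_le_sum_filter (hj : j ∈ s.C) {x : ℝ} (hx : x ≤ s.req j) :
    {D : ℝ | x ≤ ∑ i ∈ (s.Fj j).filter (fun i => dist j i ≤ D), s.y i}.Nonempty := by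
  refine ⟨∑ i ∈ s.Fj j, dist j i, ?_⟩
  rwa [Set.mem_ofPred_eq, Finset.filter_true_of_mem fun i hi =>
    Finset.single_le_sum (f := dist j) (fun i _ => dist_nonneg) hi, s.Fj_vol j hj]

theorem sum_y_nonneg (hj : j ∈ s.C) {S : Finset X} (hS : S ⊆ s.Fj j) :
    0 ≤ ∑ i ∈ S, s.y i :=
  Finset.sum_nonneg fun i hi => (s.y_pos i (s.Fj_sub j hj (hS hi))).le

/-- For `x ≤ 0` the defining set of `q_j(x)` is all of `ℝ`, whose `sInf` is the junk value `0`.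
-/
theorem q_of_nonpos (hj : j ∈ s.C) {x : ℝ} (hx : x ≤ 0) : s.q j x = 0 := by
  have huniv : {D : ℝ | x ≤ ∑ i ∈ (s.Fj j).filter (fun i => dist j i ≤ D), s.y i} =
      Set.univ :=
    Set.eq_univ_of_forall fun _ => hx.trans (s.sum_y_nonneg hj (Finset.filter_subset _ _))
  rw [q, huniv, Real.sInf_of_not_bddBelow not_bddBelow_univ]

theorem q_nonneg (hj : j ∈ s.C) (x : ℝ) : 0 ≤ s.q j x := by
  rcases le_or_gt x 0 with hx | hx
  · exact (s.q_of_nonpos hj hx).ge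
  · exact Real.sInf_nonneg fun D hD => le_of_not_gt fun hD0 => by
      rw [Set.mem_ofPred_eq, s.sum_filter_dist_le_eq_zero_of_neg hD0] at hD
      linarith

theorem q_monotoneOn (hj : j ∈ s.C) : MonotoneOn (s.q j) (Set.Icc 0 (s.req j)) := by
  intro x hx x' hx' hxx'
  rcases hx.1.eq_or_lt with h0 | h0
  · rw [← h0, s.q_of_nonpos hj le_rfl]
    exact s.q_nonneg hj x'
  · exact csInf_le_csInf (s.bddBelow_setOf_le_sum_filter h0)
      (s.nonempty_setOf_le_sum_filter hj hx'.2) fun D hD => hxx'.trans hD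

theorem q_half_req_le_two_mul_dav (hj : j ∈ s.C) : s.q j (s.req j / 2) ≤ 2 * s.dav j := by
  have hR : (0 : ℝ) < s.req j := by exact_mod_cast s.req_pos j hj
  have hmarkov := (s.q_monotoneOn hj).sub_mul_le_intervalIntegral (t := s.req j / 2)
    (by positivity) (by linarith) fun x _ => s.q_nonneg hj x
  have hint : ∫ x in (0 : ℝ)..s.req j, s.q j x = s.req j * s.dav j := by
    rw [dav]
    field_simp
  rw [hint] at hmarkov
  nlinarith

theorem le_vol_filter_dist_lt_of_q_lt (hj : j ∈ s.C) {x c : ℝ} (hxr : x ≤ s.req j)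
    (hq : s.q j x < c) : x ≤ s.vol (s.F.filter fun i => dist j i < c) := by
  obtain ⟨D, hD, hDc⟩ := exists_lt_of_csInf_lt (s.nonempty_setOf_le_sum_filter hj hxr) hq
  refine hD.trans (Finset.sum_le_sum_of_subset_of_nonneg (fun i hi => ?_) fun i hi _ =>
    (s.y_pos i (Finset.mem_filter.mp hi).1).le)
  rw [Finset.mem_filter] at hi ⊢
  exact ⟨s.Fj_sub j hj hi.1, hi.2.trans_lt hDc⟩

theorem exists_mem_Fj_dmax_le_dist (hj : j ∈ s.C) : ∃ i ∈ s.Fj j, s.dmax j ≤ dist j i := by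
  have hR : (0 : ℝ) < s.req j := by exact_mod_cast s.req_pos j hj
  have hne : (s.Fj j).Nonempty := Finset.nonempty_of_sum_ne_zero (f := s.y)
    (by rw [s.Fj_vol j hj]; exact hR.ne')
  obtain ⟨i, hi, hmax⟩ := (s.Fj j).exists_max_image (dist j) hne
  refine ⟨i, hi, csInf_le (s.bddBelow_setOf_le_sum_filter hR) ?_⟩
  rw [Set.mem_ofPred_eq, Finset.filter_true_of_mem hmax, s.Fj_vol j hj]

theorem mem_Fj_of_dist_lt_dmax (hj : j ∈ s.C) {i : X} (hi : i ∈ s.F)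
    (hij : dist j i < s.dmax j) : i ∈ s.Fj j := by
  by_contra hnot
  obtain ⟨i₀, hi₀, hfar⟩ := s.exists_mem_Fj_dmax_le_dist hj
  linarith [s.Fj_closest j hj i₀ hi₀ i hi hnot]

theorem three_mul_dmax_le_four_mul_dist {j' : X} (hj : j ∈ s.C) (hj' : j' ∈ s.C)
    (hreq : s.req j ≤ s.req j') (hdav : 6 * s.dav j < dist j j')
    (hdav' : 6 * s.dav j' < dist j j') : 3 * s.dmax j ≤ 4 * dist j j' := by
  classical
  set d := dist j j'
  have hd : 0 ≤ d := dist_nonneg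
  by_contra! hfar
  have hreq' : (s.req j : ℝ) ≤ s.req j' := by exact_mod_cast hreq
  set A := s.F.filter fun i => dist j i < d / 3
  set A' := s.F.filter fun i => dist j' i < d / 3
  have hA : s.req j / 2 ≤ s.vol A := s.le_vol_filter_dist_lt_of_q_lt hj (by linarith)
    (by linarith [s.q_half_req_le_two_mul_dav hj])
  have hA' : s.req j / 2 ≤ s.vol A' := by
    have hhalf := s.le_vol_filter_dist_lt_of_q_lt hj' (x := s.req j' / 2) (c := d / 3)
      (by linarith) (by linarith [s.q_half_req_le_two_mul_dav hj'])
    linarith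
  obtain ⟨i₀, hi₀, hi₀_far⟩ := s.exists_mem_Fj_dmax_le_dist hj
  have hdisj : Disjoint A A' := Finset.disjoint_left.mpr fun i hiA hiA' => by
    linarith [(Finset.mem_filter.mp hiA).2, (Finset.mem_filter.mp hiA').2,
      dist_triangle_right j j' i]
  have hi₀_notMem : i₀ ∉ A ∪ A' := by
    simp only [A, A', Finset.mem_union, Finset.mem_filter, not_or, not_and, not_lt]
    constructor <;> intro _ <;> linarith [dist_triangle j j' i₀]
  have hsub : insert i₀ (A ∪ A') ⊆ s.Fj j := by
    refine Finset.insert_subset hi₀ (Finset.union_subset (fun i hi => ?_) fun i hi => ?_)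
    · obtain ⟨hiF, hij⟩ := Finset.mem_filter.mp hi
      exact s.mem_Fj_of_dist_lt_dmax hj hiF (by linarith)
    · obtain ⟨hiF, hij'⟩ := Finset.mem_filter.mp hi
      exact s.mem_Fj_of_dist_lt_dmax hj hiF (by linarith [dist_triangle j j' i])
  have hvol : s.vol (insert i₀ (A ∪ A')) ≤ s.req j := by
    rw [← s.Fj_vol j hj]
    exact Finset.sum_le_sum_of_subset_of_nonneg hsub fun i hi _ =>
      (s.y_pos i (s.Fj_sub j hj hi)).le
  rw [vol, Finset.sum_insert hi₀_notMem, Finset.sum_union hdisj] at hvol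
  unfold vol at hA hA'
  linarith [s.y_pos i₀ (s.Fj_sub j hj hi₀)]

end FracSol

open FracSol in
theorem dangerous_clients_far_away_general {X : Type*} [MetricSpace X]
    (s : FracSol X) (j j' : X)
    (hd : s.Dangerous j) (hd' : s.Dangerous j')
    (r : ℕ) (hr : s.req j = r) (hr' : s.req j' = r)
    (hnc : 6 * max (s.dav j) (s.dav j') < dist j j') :
    s.dmax j / 10 + s.dmax j' / 10 ≤ dist j j' := by
  have hdav : 6 * s.dav j < dist j j' := by linarith [le_max_left (s.dav j) (s.dav j')]
  have hdav' : 6 * s.dav j' < dist j j' := by linarith [le_max_right (s.dav j) (s.dav j')]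
  have hj := s.three_mul_dmax_le_four_mul_dist hd.1 hd'.1 (hr.trans hr'.symm).le hdav hdav'
  have hj' := s.three_mul_dmax_le_four_mul_dist hd'.1 hd.1 (hr'.trans hr.symm).le
    (dist_comm j j' ▸ hdav') (dist_comm j j' ▸ hdav)
  rw [dist_comm] at hj'
  linarith [dist_nonneg (x := j) (y := j')]

open FracSol in
/-- Lemma 3 of the paper: two distinct non-conflicting dangerous clients with the same
requirement are far apart: `d(j,j') ≥ d_max(j)/10 + d_max(j')/10`. -/
theorem dangerous_clients_far_away {X : Type*} [MetricSpace X]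
    (s : FracSol X) (j j' : X) (hne : j ≠ j')
    (hd : s.Dangerous j) (hd' : s.Dangerous j')
    (r : ℕ) (hr : s.req j = r) (hr' : s.req j' = r)
    (h1 : 0 < s.dmax j) (h2 : 0 < s.dmax j')
    (hnc : 6 * max (s.dav j) (s.dav j') < dist j j') :
    s.dmax j / 10 + s.dmax j' / 10 ≤ dist j j' :=
  dangerous_clients_far_away_general s j j' hd hd' r hr hr' hnc
end

section
/- Let F be a finite set, 𝒰 a family of pairwise disjoint subsets of F, ℒ a laminar family of subsets of F (any two members of ℒ are nested or disjoint), k a nonnegative integer, and for each L ∈ ℒ integers a_L ≤ b_L. Then the polytope P = {z ∈ [0,1]^F : ∑_{i∈U} z_i = 1 for all U ∈ 𝒰; a_L ≤ ∑_{i∈L} z_i ≤ b_L for all L ∈ ℒ; ∑_{i∈F} z_i = k} is integral: every point of P can be written as a convex combination of points of P with all coordinates in {0,1}. -/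
/-!
Induction on the number of inequalities that are not tight. Let `z` be a point of the polytope
with a fractional coordinate and `S` the set of its fractional coordinates. The tight constraints,
traced on `S`, form two laminar families whose `z`-sums are integers. In a laminar family every
member is the disjoint union of the cores (points in no smaller member) of the members inside it,
and a nonempty core has at least two points, its `z`-sum being an integer strictly between `0` and
its size. So the two families impose at most `|S|` block equations, and exactly `|S|`
only if both partition `S`, in which case one equation is redundant. Hence some `d ≠ 0` supported
on `S` keeps all tight constraints tight, and `z` lies strictly between two points `z + ε₁ d`,
`z - ε₂ d` of the polytope with more tight constraints.
-/

open Finset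

section LaminarFamily

variable {α : Type*}

def IsLaminar (𝒜 : Set (Finset α)) : Prop :=
  ∀ A ∈ 𝒜, ∀ B ∈ 𝒜, A ⊆ B ∨ B ⊆ A ∨ Disjoint A B

namespace IsLaminar

variable {𝒜 ℬ : Set (Finset α)}

lemma mono (h : IsLaminar 𝒜) (hℬ : ℬ ⊆ 𝒜) : IsLaminar ℬ :=
  fun A hA B hB => h A (hℬ hA) B (hℬ hB)

lemma insert_univ [Fintype α] (h : IsLaminar 𝒜) : IsLaminar (insert univ 𝒜) := by
  rintro A (rfl | hA) B (rfl | hB)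
  · exact .inl subset_rfl
  · exact .inr (.inl (subset_univ B))
  · exact .inl (subset_univ A)
  · exact h A hA B hB

lemma image_inter [DecidableEq α] (h : IsLaminar 𝒜) (S : Finset α) :
    IsLaminar ((· ∩ S) '' 𝒜) := by
  rintro _ ⟨A, hA, rfl⟩ _ ⟨B, hB, rfl⟩
  rcases h A hA B hB with hAB | hBA | hAB
  · exact .inl (inter_subset_inter_right hAB)
  · exact .inr (.inl (inter_subset_inter_right hBA))
  · exact .inr (.inr (hAB.mono inter_subset_left inter_subset_left))

lemma of_pairwiseDisjoint (h : 𝒜.PairwiseDisjoint id) : IsLaminar 𝒜 := by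
  intro A hA B hB
  obtain rfl | hAB := eq_or_ne A B
  · exact .inl subset_rfl
  · exact .inr (.inr (h hA hB hAB))

end IsLaminar

lemma sum_inter_mem_of_sum_mem [DecidableEq α] {M : Type*} [AddCommGroup M] (G : AddSubgroup M)
    {f : α → M} {T S : Finset α} (hT : ∑ i ∈ T, f i ∈ G) (hS : ∀ i ∉ S, f i ∈ G) :
    ∑ i ∈ T ∩ S, f i ∈ G := by
  rw [eq_sub_of_add_eq (sum_inter_add_sum_sdiff T S f)]
  exact G.sub_mem hT (G.sum_mem fun i hi => hS i (mem_sdiff.1 hi).2)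

lemma two_le_card_of_sum_eq_intCast {B : Finset α} {x : α → ℝ} (hx : ∀ i ∈ B, 0 < x i ∧ x i < 1)
    (hB : B.Nonempty) {m : ℤ} (hm : ∑ i ∈ B, x i = m) : 2 ≤ B.card := by
  have hpos : (0 : ℝ) < m := hm ▸ sum_pos (fun i hi => (hx i hi).1) hB
  have hlt : (m : ℝ) < B.card := hm ▸ by
    simpa using sum_lt_sum_of_nonempty hB fun i hi => (hx i hi).2
  have : (0 : ℤ) < m := by exact_mod_cast hpos
  have : m < B.card := by exact_mod_cast hlt
  omega

variable [DecidableEq α]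

def laminarCore (𝒜 : Finset (Finset α)) (A : Finset α) : Finset α :=
  A \ (𝒜.filter (· ⊂ A)).biUnion id

variable {𝒜 : Finset (Finset α)} {A B : Finset α}

lemma laminarCore_subset : laminarCore 𝒜 A ⊆ A := sdiff_subset

lemma notMem_laminarCore_of_ssubset (hB : B ∈ 𝒜) (hBA : B ⊂ A) {i : α} (hi : i ∈ B) :
    i ∉ laminarCore 𝒜 A := fun hiA =>
  (mem_sdiff.1 hiA).2 (mem_biUnion.2 ⟨B, mem_filter.2 ⟨hB, hBA⟩, hi⟩)

lemma IsLaminar.disjoint_laminarCore (h : IsLaminar (𝒜 : Set (Finset α))) (hA : A ∈ 𝒜)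
    (hB : B ∈ 𝒜) (hAB : A ≠ B) : Disjoint (laminarCore 𝒜 A) (laminarCore 𝒜 B) := by
  rw [disjoint_left]
  intro i hiA hiB
  rcases h A hA B hB with hsub | hsub | hdisj
  · exact notMem_laminarCore_of_ssubset hA (ssubset_of_subset_of_ne hsub hAB)
      (laminarCore_subset hiA) hiB
  · exact notMem_laminarCore_of_ssubset hB (ssubset_of_subset_of_ne hsub hAB.symm)
      (laminarCore_subset hiB) hiA
  · exact disjoint_left.1 hdisj (laminarCore_subset hiA) (laminarCore_subset hiB)

/-- Every point of `A ∈ 𝒜` lies in the core of a smallest member of `𝒜` containing it. -/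
lemma biUnion_laminarCore (hA : A ∈ 𝒜) : (𝒜.filter (· ⊆ A)).biUnion (laminarCore 𝒜) = A := by
  refine Subset.antisymm (biUnion_subset.2 fun B hB => laminarCore_subset.trans
    (mem_filter.1 hB).2) fun i hi => ?_
  obtain ⟨M, hM, hMmin⟩ := exists_min_image (𝒜.filter fun B => i ∈ B ∧ B ⊆ A) card
    ⟨A, mem_filter.2 ⟨hA, hi, subset_rfl⟩⟩
  obtain ⟨hM𝒜, hiM, hMA⟩ := mem_filter.1 hM
  refine mem_biUnion.2 ⟨M, mem_filter.2 ⟨hM𝒜, hMA⟩, mem_sdiff.2 ⟨hiM, fun hcov => ?_⟩⟩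
  obtain ⟨B, hB, hiB⟩ := mem_biUnion.1 hcov
  obtain ⟨hB𝒜, hBM⟩ := mem_filter.1 hB
  exact (card_lt_card hBM).not_ge
    (hMmin B (mem_filter.2 ⟨hB𝒜, hiB, hBM.subset.trans hMA⟩))

lemma IsLaminar.sum_eq_sum_sum_laminarCore {M : Type*} [AddCommMonoid M]
    (h : IsLaminar (𝒜 : Set (Finset α))) (hA : A ∈ 𝒜) (f : α → M) :
    ∑ i ∈ A, f i = ∑ B ∈ 𝒜.filter (· ⊆ A), ∑ i ∈ laminarCore 𝒜 B, f i := by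
  conv_lhs => rw [← biUnion_laminarCore hA]
  exact sum_biUnion fun B hB C hC hBC =>
    h.disjoint_laminarCore (mem_filter.1 hB).1 (mem_filter.1 hC).1 hBC

lemma IsLaminar.sum_laminarCore_mem {M : Type*} [AddCommGroup M] (G : AddSubgroup M)
    (h : IsLaminar (𝒜 : Set (Finset α))) {f : α → M} (hf : ∀ A ∈ 𝒜, ∑ i ∈ A, f i ∈ G) :
    ∀ A ∈ 𝒜, ∑ i ∈ laminarCore 𝒜 A, f i ∈ G := by
  intro A
  induction A using Finset.strongInduction with
  | H A ih =>
    intro hA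
    have hsplit : 𝒜.filter (· ⊆ A) = insert A (𝒜.filter (· ⊂ A)) := by
      ext B
      by_cases hBA : B = A <;> simp [hBA, hA, ssubset_iff_subset_ne]
    have hsum := h.sum_eq_sum_sum_laminarCore hA f
    rw [hsplit, sum_insert fun hA' => (mem_filter.1 hA').2.false] at hsum
    rw [eq_sub_of_add_eq hsum.symm]
    exact G.sub_mem (hf A hA) (G.sum_mem fun B hB => ih B (mem_filter.1 hB).2 (mem_filter.1 hB).1)

/-- The blocks are the nonempty cores; each has at least two elements because its `x`-sum is an
integer strictly between `0` and its size. -/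
lemma IsLaminar.exists_blocks (h : IsLaminar (𝒜 : Set (Finset α))) {S : Finset α} {x : α → ℝ}
    (hx : ∀ i ∈ S, 0 < x i ∧ x i < 1) (hS : ∀ A ∈ 𝒜, A ⊆ S)
    (hint : ∀ A ∈ 𝒜, ∑ i ∈ A, x i ∈ (Int.castAddHom ℝ).range) :
    ∃ P : Finset (Finset α), (P : Set (Finset α)).PairwiseDisjoint id ∧
      (∀ B ∈ P, B ⊆ S ∧ 2 ≤ B.card) ∧
      ∀ d : α → ℝ, (∀ B ∈ P, ∑ i ∈ B, d i = 0) → ∀ A ∈ 𝒜, ∑ i ∈ A, d i = 0 := by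
  refine ⟨(𝒜.image (laminarCore 𝒜)).filter Finset.Nonempty, ?_, fun B hB => ?_, ?_⟩
  · intro B hB C hC hBC
    obtain ⟨A, hA, rfl⟩ := mem_image.1 (mem_filter.1 hB).1
    obtain ⟨A', hA', rfl⟩ := mem_image.1 (mem_filter.1 hC).1
    exact h.disjoint_laminarCore hA hA' fun hAA' => hBC (hAA' ▸ rfl)
  · obtain ⟨hB, hne⟩ := mem_filter.1 hB
    obtain ⟨A, hA, rfl⟩ := mem_image.1 hB
    have hAS := (laminarCore_subset (𝒜 := 𝒜)).trans (hS A hA)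
    obtain ⟨m, hm⟩ := AddMonoidHom.mem_range.1 (h.sum_laminarCore_mem _ hint A hA)
    exact ⟨hAS, two_le_card_of_sum_eq_intCast (fun i hi => hx i (hAS hi)) hne hm.symm⟩
  · intro d hd A hA
    rw [h.sum_eq_sum_sum_laminarCore hA]
    refine sum_eq_zero fun B hB => ?_
    rcases (laminarCore 𝒜 B).eq_empty_or_nonempty with hempty | hne
    · rw [hempty, sum_empty]
    · exact hd _ (mem_filter.2 ⟨mem_image_of_mem _ (mem_filter.1 hB).1, hne⟩)

lemma exists_ne_zero_sum_eq_zero_of_card_lt [Fintype α] {S : Finset α} {Q : Finset (Finset α)}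
    (h : Q.card < S.card) :
    ∃ d : α → ℝ, d ≠ 0 ∧ (∀ i ∉ S, d i = 0) ∧ ∀ B ∈ Q, ∑ i ∈ B, d i = 0 := by
  let f : (α → ℝ) →ₗ[ℝ] ({i // i ∈ Sᶜ} → ℝ) × ({B // B ∈ Q} → ℝ) :=
    (LinearMap.pi fun i => LinearMap.proj i.1).prod
      (LinearMap.pi fun B => ∑ i ∈ B.1, LinearMap.proj i)
  have hker : LinearMap.ker f ≠ ⊥ := LinearMap.ker_ne_bot_of_finrank_lt <| by
    simp only [Module.finrank_prod, Module.finrank_fintype_fun_eq_card, Fintype.card_coe,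
      card_compl]
    have := card_le_univ S
    omega
  obtain ⟨d, hd, hd0⟩ := Submodule.exists_mem_ne_zero_of_ne_bot hker
  refine ⟨d, hd0, fun i hi => ?_, fun B hB => ?_⟩
  · simpa [f] using congrFun (congrArg Prod.fst hd) ⟨i, mem_compl.2 hi⟩
  · simpa [f] using congrFun (congrArg Prod.snd hd) ⟨B, hB⟩

lemma two_mul_card_le_card_biUnion {P : Finset (Finset α)}
    (hP : (P : Set (Finset α)).PairwiseDisjoint id) (hcard : ∀ B ∈ P, 2 ≤ B.card) :
    2 * P.card ≤ (P.biUnion id).card := by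
  rw [card_biUnion hP, mul_comm, ← smul_eq_mul, ← sum_const]
  exact sum_le_sum hcard

lemma exists_ne_zero_sum_eq_zero_of_blocks [Fintype α] {S : Finset α} (hS : S.Nonempty)
    {P₁ P₂ : Finset (Finset α)} (hP₁ : (P₁ : Set (Finset α)).PairwiseDisjoint id)
    (hP₂ : (P₂ : Set (Finset α)).PairwiseDisjoint id) (hB₁ : ∀ B ∈ P₁, B ⊆ S ∧ 2 ≤ B.card)
    (hB₂ : ∀ B ∈ P₂, B ⊆ S ∧ 2 ≤ B.card) :
    ∃ d : α → ℝ, d ≠ 0 ∧ (∀ i ∉ S, d i = 0) ∧ ∀ B ∈ P₁ ∪ P₂, ∑ i ∈ B, d i = 0 := by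
  have hcard₁ := two_mul_card_le_card_biUnion hP₁ fun B hB => (hB₁ B hB).2
  have hcard₂ := two_mul_card_le_card_biUnion hP₂ fun B hB => (hB₂ B hB).2
  have hsub₁ : P₁.biUnion id ⊆ S := biUnion_subset.2 fun B hB => (hB₁ B hB).1
  have hsub₂ : P₂.biUnion id ⊆ S := biUnion_subset.2 fun B hB => (hB₂ B hB).1
  have hle₁ := card_le_card hsub₁
  have hle₂ := card_le_card hsub₂
  by_cases hlt : P₁.card + P₂.card < S.card
  · exact exists_ne_zero_sum_eq_zero_of_card_lt ((card_union_le _ _).trans_lt hlt)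
  -- Otherwise both families partition `S`, so the equation of one block follows from the others.
  have hcov₁ : P₁.biUnion id = S := eq_of_subset_of_card_le hsub₁ (by omega)
  have hcov₂ : P₂.biUnion id = S := eq_of_subset_of_card_le hsub₂ (by omega)
  obtain ⟨B₀, hB₀⟩ : P₂.Nonempty := by
    rw [nonempty_iff_ne_empty]
    rintro rfl
    rw [biUnion_empty] at hcov₂
    exact hS.ne_empty hcov₂.symm
  obtain ⟨d, hd0, hdS, hd⟩ := exists_ne_zero_sum_eq_zero_of_card_lt (S := S)
    (Q := P₁ ∪ P₂.erase B₀) <| by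
      have hunion := card_union_le P₁ (P₂.erase B₀)
      have herase := card_erase_of_mem hB₀
      have hpos := card_pos.2 ⟨B₀, hB₀⟩
      omega
  have hsum : ∑ i ∈ S, d i = 0 := by
    rw [← hcov₁, sum_biUnion hP₁]
    exact sum_eq_zero fun B hB => hd B (mem_union_left _ hB)
  rw [← hcov₂, sum_biUnion hP₂, ← add_sum_erase _ _ hB₀] at hsum
  simp only [id_eq] at hsum
  rw [sum_eq_zero fun B hB => hd B (mem_union_right _ hB), add_zero] at hsum
  refine ⟨d, hd0, hdS, fun B hB => ?_⟩
  obtain rfl | hne := eq_or_ne B B₀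
  · exact hsum
  rcases mem_union.1 hB with hB | hB
  · exact hd B (mem_union_left _ hB)
  · exact hd B (mem_union_right _ (mem_erase.2 ⟨hne, hB⟩))

lemma exists_ne_zero_sum_eq_zero_of_isLaminar [Fintype α] {S : Finset α} (hS : S.Nonempty)
    {x : α → ℝ} (hx : ∀ i ∈ S, 0 < x i ∧ x i < 1) {𝒜₁ 𝒜₂ : Set (Finset α)}
    (h₁ : IsLaminar 𝒜₁) (h₂ : IsLaminar 𝒜₂) (h𝒜 : ∀ A ∈ 𝒜, A ∈ 𝒜₁ ∨ A ∈ 𝒜₂)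
    (hsub : ∀ A ∈ 𝒜, A ⊆ S) (hint : ∀ A ∈ 𝒜, ∑ i ∈ A, x i ∈ (Int.castAddHom ℝ).range) :
    ∃ d : α → ℝ, d ≠ 0 ∧ (∀ i ∉ S, d i = 0) ∧ ∀ A ∈ 𝒜, ∑ i ∈ A, d i = 0 := by
  classical
  have hlam₁ : IsLaminar (↑(𝒜.filter (· ∈ 𝒜₁)) : Set (Finset α)) :=
    h₁.mono fun A hA => (mem_filter.1 hA).2
  have hlam₂ : IsLaminar (↑(𝒜.filter (· ∉ 𝒜₁)) : Set (Finset α)) :=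
    h₂.mono fun A hA => ((h𝒜 A (mem_filter.1 hA).1).resolve_left (mem_filter.1 hA).2)
  obtain ⟨P₁, hP₁, hB₁, hd₁⟩ := hlam₁.exists_blocks hx (fun A hA => hsub A (mem_filter.1 hA).1)
    fun A hA => hint A (mem_filter.1 hA).1
  obtain ⟨P₂, hP₂, hB₂, hd₂⟩ := hlam₂.exists_blocks hx (fun A hA => hsub A (mem_filter.1 hA).1)
    fun A hA => hint A (mem_filter.1 hA).1
  obtain ⟨d, hd0, hdS, hd⟩ := exists_ne_zero_sum_eq_zero_of_blocks hS hP₁ hP₂ hB₁ hB₂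
  refine ⟨d, hd0, hdS, fun A hA => ?_⟩
  by_cases hA₁ : A ∈ 𝒜₁
  · exact hd₁ d (fun B hB => hd B (mem_union_left _ hB)) A (mem_filter.2 ⟨hA, hA₁⟩)
  · exact hd₂ d (fun B hB => hd B (mem_union_right _ hB)) A (mem_filter.2 ⟨hA, hA₁⟩)

end LaminarFamily

section Polyhedron

variable {E K : Type*} [AddCommGroup E] [Module ℝ E]

def polyhedron (ℓ : K → E →ₗ[ℝ] ℝ) (β : K → ℝ) : Set E := {z | ∀ k, ℓ k z ≤ β k}

variable [Fintype K]

noncomputable def looseConstraints (ℓ : K → E →ₗ[ℝ] ℝ) (β : K → ℝ) (z : E) : Finset K :=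
  univ.filter fun k => ℓ k z < β k

variable {ℓ : K → E →ₗ[ℝ] ℝ} {β : K → ℝ}

/-- The ratio test of the simplex method. -/
lemma exists_pos_add_smul_mem_polyhedron {z d : E} (hz : z ∈ polyhedron ℓ β)
    (htight : ∀ k, ℓ k z = β k → ℓ k d = 0) (hd : ∃ k, 0 < ℓ k d) :
    ∃ ε : ℝ, 0 < ε ∧ z + ε • d ∈ polyhedron ℓ β ∧
      looseConstraints ℓ β (z + ε • d) ⊂ looseConstraints ℓ β z := by
  obtain ⟨k₀, hk₀, hmin⟩ := exists_min_image (univ.filter fun k => 0 < ℓ k d)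
    (fun k => (β k - ℓ k z) / ℓ k d) (hd.imp fun k hk => mem_filter.2 ⟨mem_univ k, hk⟩)
  have hk₀d : 0 < ℓ k₀ d := (mem_filter.1 hk₀).2
  have hk₀z : ℓ k₀ z < β k₀ := (hz k₀).lt_of_ne fun h => hk₀d.ne' (htight k₀ h)
  set ε := (β k₀ - ℓ k₀ z) / ℓ k₀ d with hε
  have hmove : ∀ k, ℓ k (z + ε • d) = ℓ k z + ε * ℓ k d := fun k => by simp
  have hεpos : 0 < ε := div_pos (sub_pos.2 hk₀z) hk₀d
  refine ⟨ε, hεpos, fun k => ?_, (ssubset_iff_of_subset fun k hk => ?_).2 ?_⟩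
  · rw [hmove]
    rcases le_or_gt (ℓ k d) 0 with hkd | hkd
    · nlinarith [hz k]
    · have := hmin k (mem_filter.2 ⟨mem_univ k, hkd⟩)
      rw [le_div_iff₀ hkd] at this
      linarith
  · simp only [looseConstraints, mem_filter, mem_univ, true_and] at hk ⊢
    refine (hz k).lt_of_ne fun h => ?_
    rw [hmove, htight k h, mul_zero, add_zero, h] at hk
    exact hk.false
  · refine ⟨k₀, mem_filter.2 ⟨mem_univ _, hk₀z⟩, fun h => (mem_filter.1 h).2.ne ?_⟩
    rw [hmove, hε, div_mul_cancel₀ _ hk₀d.ne']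
    ring

theorem polyhedron_subset_convexHull (V : Set E)
    (h : ∀ z ∈ polyhedron ℓ β, z ∉ V → ∃ d : E, (∀ k, ℓ k z = β k → ℓ k d = 0) ∧
      (∃ k, 0 < ℓ k d) ∧ ∃ k, ℓ k d < 0) :
    polyhedron ℓ β ⊆ convexHull ℝ (polyhedron ℓ β ∩ V) := by
  suffices ∀ s z, looseConstraints ℓ β z = s → z ∈ polyhedron ℓ β →
      z ∈ convexHull ℝ (polyhedron ℓ β ∩ V) from fun z => this _ z rfl
  intro s
  induction s using Finset.strongInduction with
  | H s ih =>
  rintro z rfl hz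
  by_cases hzV : z ∈ V
  · exact subset_convexHull ℝ _ ⟨hz, hzV⟩
  obtain ⟨d, htight, ⟨k₁, hk₁⟩, k₂, hk₂⟩ := h z hz hzV
  obtain ⟨ε₁, hε₁, hz₁, hs₁⟩ := exists_pos_add_smul_mem_polyhedron hz htight ⟨k₁, hk₁⟩
  obtain ⟨ε₂, hε₂, hz₂, hs₂⟩ := exists_pos_add_smul_mem_polyhedron (d := -d) hz
    (fun k hk => by rw [map_neg, htight k hk, neg_zero]) ⟨k₂, by rw [map_neg]; linarith⟩
  have hsum : ε₁ + ε₂ ≠ 0 := by positivity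
  have hcomb : (ε₂ / (ε₁ + ε₂)) • (z + ε₁ • d) + (ε₁ / (ε₁ + ε₂)) • (z + ε₂ • -d) = z := by
    match_scalars <;> field_simp <;> ring
  rw [← hcomb]
  exact convex_convexHull ℝ _ (ih _ hs₁ _ rfl hz₁) (ih _ hs₂ _ rfl hz₂) (by positivity)
    (by positivity) (by rw [← add_div, add_comm ε₂, div_self hsum])

end Polyhedron

section SetSumPolytope

variable {α ι : Type*}

def setSumPolytope (T : ι → Finset α) (lo hi : ι → ℤ) : Set (α → ℝ) :=
  {z | (∀ i, 0 ≤ z i ∧ z i ≤ 1) ∧ ∀ j, (lo j : ℝ) ≤ ∑ i ∈ T j, z i ∧ ∑ i ∈ T j, z i ≤ hi j}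

/-- The upper-bound rows read `z i` and `∑ i ∈ T j, z i`; the lower-bound rows are their
negatives. -/
def setSumRow (T : ι → Finset α) : (α ⊕ ι) ⊕ (α ⊕ ι) → (α → ℝ) →ₗ[ℝ] ℝ :=
  let row : α ⊕ ι → (α → ℝ) →ₗ[ℝ] ℝ :=
    Sum.elim LinearMap.proj fun j => ∑ i ∈ T j, LinearMap.proj i
  Sum.elim row fun r => -row r

def setSumBound (lo hi : ι → ℤ) : (α ⊕ ι) ⊕ (α ⊕ ι) → ℝ :=
  Sum.elim (Sum.elim 1 fun j => hi j) (Sum.elim 0 fun j => -lo j)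

variable {T : ι → Finset α} {lo hi : ι → ℤ}

lemma setSumPolytope_eq_polyhedron :
    setSumPolytope T lo hi = polyhedron (setSumRow T) (setSumBound lo hi) := by
  ext z
  simp only [setSumPolytope, polyhedron, setSumRow, setSumBound, Set.mem_ofPred_eq, forall_and,
    Sum.forall, Sum.elim_inl, Sum.elim_inr, LinearMap.coe_proj, Function.eval, Pi.one_apply,
    Pi.zero_apply, LinearMap.coe_sum, Finset.sum_apply, LinearMap.neg_apply,
    Left.neg_nonpos_iff, neg_le_neg_iff]
  tauto

variable [Fintype α] [Fintype ι]

lemma exists_direction_of_mem_setSumPolytope {𝒜₁ 𝒜₂ : Set (Finset α)} (h₁ : IsLaminar 𝒜₁)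
    (h₂ : IsLaminar 𝒜₂) (hT : ∀ j, T j ∈ 𝒜₁ ∨ T j ∈ 𝒜₂) {z : α → ℝ}
    (hz : z ∈ setSumPolytope T lo hi) (hzV : ¬ ∀ i, z i = 0 ∨ z i = 1) :
    ∃ d : α → ℝ, d ≠ 0 ∧ (∀ i, (z i = 0 ∨ z i = 1) → d i = 0) ∧
      ∀ j, (∑ i ∈ T j, z i = lo j ∨ ∑ i ∈ T j, z i = hi j) → ∑ i ∈ T j, d i = 0 := by
  classical
  set S := univ.filter fun i => ¬(z i = 0 ∨ z i = 1)
  have hS : S.Nonempty := by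
    push Not at hzV
    obtain ⟨i, hi⟩ := hzV
    exact ⟨i, by simpa [S] using hi⟩
  have hx : ∀ i ∈ S, 0 < z i ∧ z i < 1 := by
    intro i hi
    simp only [S, mem_filter, mem_univ, true_and, not_or] at hi
    exact ⟨(hz.1 i).1.lt_of_ne' hi.1, (hz.1 i).2.lt_of_ne hi.2⟩
  set tight := univ.filter fun j => ∑ i ∈ T j, z i = lo j ∨ ∑ i ∈ T j, z i = hi j
  have hint (j) (hj : j ∈ tight) : ∑ i ∈ T j ∩ S, z i ∈ (Int.castAddHom ℝ).range := by
    refine sum_inter_mem_of_sum_mem _ ?_ fun i hi => ?_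
    · rcases (mem_filter.1 hj).2 with h | h <;> exact ⟨_, h.symm⟩
    · rcases not_not.1 fun h => hi (mem_filter.2 ⟨mem_univ i, h⟩) with h | h
      · exact ⟨0, by simp [h]⟩
      · exact ⟨1, by simp [h]⟩
  obtain ⟨d, hd0, hdS, hd⟩ := exists_ne_zero_sum_eq_zero_of_isLaminar (𝒜 := tight.image (T · ∩ S))
    hS hx (h₁.image_inter S) (h₂.image_inter S)
    (forall_mem_image.2 fun j _ => (hT j).imp (Set.mem_image_of_mem _) (Set.mem_image_of_mem _))
    (forall_mem_image.2 fun _ _ => inter_subset_right) (forall_mem_image.2 hint)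
  refine ⟨d, hd0, fun i hi => hdS i fun hiS => (mem_filter.1 hiS).2 hi, fun j hj => ?_⟩
  rw [← sum_subset inter_subset_left fun i hiT hiTS =>
    hdS i fun hiS => hiTS (mem_inter.2 ⟨hiT, hiS⟩)]
  exact hd _ (mem_image_of_mem _ (mem_filter.2 ⟨mem_univ j, hj⟩))

theorem setSumPolytope_subset_convexHull {𝒜₁ 𝒜₂ : Set (Finset α)} (h₁ : IsLaminar 𝒜₁)
    (h₂ : IsLaminar 𝒜₂) (hT : ∀ j, T j ∈ 𝒜₁ ∨ T j ∈ 𝒜₂) :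
    setSumPolytope T lo hi ⊆
      convexHull ℝ (setSumPolytope T lo hi ∩ {v | ∀ i, v i = 0 ∨ v i = 1}) := by
  rw [setSumPolytope_eq_polyhedron]
  refine polyhedron_subset_convexHull _ fun z hz hzV => ?_
  rw [← setSumPolytope_eq_polyhedron] at hz
  obtain ⟨d, hd0, hdbox, hdsum⟩ := exists_direction_of_mem_setSumPolytope h₁ h₂ hT hz hzV
  obtain ⟨i₀, hi₀⟩ := Function.ne_iff.1 hd0
  refine ⟨d, fun k hk => ?_, ?_, ?_⟩
  · rcases k with (i | j) | (i | j) <;>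
      simp only [setSumRow, setSumBound, Sum.elim_inl, Sum.elim_inr, LinearMap.neg_apply,
        LinearMap.proj_apply, LinearMap.sum_apply, neg_inj, Pi.one_apply,
        Pi.zero_apply, neg_eq_zero] at hk ⊢
    · exact hdbox i (.inr hk)
    · exact hdsum j (.inr hk)
    · exact hdbox i (.inl hk)
    · exact hdsum j (.inl hk)
  · rcases hi₀.lt_or_gt with h | h
    · exact ⟨.inr (.inl i₀), by simpa [setSumRow] using h⟩
    · exact ⟨.inl (.inl i₀), by simpa [setSumRow] using h⟩
  · rcases hi₀.lt_or_gt with h | h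
    · exact ⟨.inl (.inl i₀), by simpa [setSumRow] using h⟩
    · exact ⟨.inr (.inl i₀), by simpa [setSumRow] using h⟩

end SetSumPolytope

theorem laminar_polytope_integral_general {α : Type*} [Fintype α] [DecidableEq α]
    (𝒰 : Finset (Finset α))
    (hdisj : ∀ U ∈ 𝒰, ∀ U' ∈ 𝒰, U ≠ U' → U ∩ U' = ∅)
    (ℒ : Finset (Finset α))
    (hlam : ∀ L ∈ ℒ, ∀ L' ∈ ℒ, L ⊆ L' ∨ L' ⊆ L ∨ L ∩ L' = ∅)
    (k : ℕ) (a b : Finset α → ℤ)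
    (z : α → ℝ)
    (hbox : ∀ i : α, 0 ≤ z i ∧ z i ≤ 1)
    (hbundle : ∀ U ∈ 𝒰, ∑ i ∈ U, z i = 1)
    (hlambound : ∀ L ∈ ℒ, (a L : ℝ) ≤ ∑ i ∈ L, z i ∧ ∑ i ∈ L, z i ≤ (b L : ℝ))
    (htotal : ∑ i : α, z i = (k : ℝ)) :
    ∃ (m : ℕ) (w : Fin m → ℝ) (v : Fin m → α → ℝ),
      (∀ p : Fin m, 0 ≤ w p) ∧ (∑ p : Fin m, w p = 1) ∧
      (∀ p : Fin m,
        (∀ i : α, v p i = 0 ∨ v p i = 1) ∧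
        (∀ U ∈ 𝒰, ∑ i ∈ U, v p i = 1) ∧
        (∀ L ∈ ℒ, (a L : ℝ) ≤ ∑ i ∈ L, v p i ∧ ∑ i ∈ L, v p i ≤ (b L : ℝ)) ∧
        (∑ i : α, v p i = (k : ℝ))) ∧
      (∀ i : α, z i = ∑ p : Fin m, w p * v p i) := by
  let T : {U // U ∈ 𝒰} ⊕ {L // L ∈ ℒ} ⊕ Unit → Finset α :=
    Sum.elim (↑) (Sum.elim (↑) fun _ => univ)
  let lo : {U // U ∈ 𝒰} ⊕ {L // L ∈ ℒ} ⊕ Unit → ℤ := Sum.elim 1 (Sum.elim (a ∘ (↑)) fun _ => k)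
  let hi : {U // U ∈ 𝒰} ⊕ {L // L ∈ ℒ} ⊕ Unit → ℤ := Sum.elim 1 (Sum.elim (b ∘ (↑)) fun _ => k)
  have hmem (v : α → ℝ) : v ∈ setSumPolytope T lo hi ↔ (∀ i, 0 ≤ v i ∧ v i ≤ 1) ∧
      (∀ U ∈ 𝒰, ∑ i ∈ U, v i = 1) ∧
      (∀ L ∈ ℒ, (a L : ℝ) ≤ ∑ i ∈ L, v i ∧ ∑ i ∈ L, v i ≤ (b L : ℝ)) ∧ ∑ i, v i = k := by
    simp [setSumPolytope, T, lo, hi, Sum.forall, ← le_antisymm_iff, eq_comm]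
  have h₁ : IsLaminar (insert univ (ℒ : Set (Finset α))) := IsLaminar.insert_univ
    fun L hL L' hL' => (hlam L hL L' hL').imp_right (Or.imp_right disjoint_iff_inter_eq_empty.2)
  have h₂ : IsLaminar (𝒰 : Set (Finset α)) := IsLaminar.of_pairwiseDisjoint
    fun U hU U' hU' hne => disjoint_iff_inter_eq_empty.2 (hdisj U hU U' hU' hne)
  have hT (j) : T j ∈ insert univ (ℒ : Set (Finset α)) ∨ T j ∈ (𝒰 : Set (Finset α)) := by
    rcases j with U | L | _ <;> simp [T]
  obtain ⟨ι, _, w, v, hw0, hw1, hv, hwv⟩ := mem_convexHull_iff_exists_fintype.1 <|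
    setSumPolytope_subset_convexHull h₁ h₂ hT ((hmem z).2 ⟨hbox, hbundle, hlambound, htotal⟩)
  let e := (Fintype.equivFin ι).symm
  refine ⟨Fintype.card ι, w ∘ e, v ∘ e, fun p => hw0 _, (e.sum_comp w).trans hw1,
    fun p => ⟨(hv (e p)).2, (hmem _).1 (hv (e p)).1 |>.2⟩, fun i => ?_⟩
  rw [← hwv, Finset.sum_apply, ← e.sum_comp]
  rfl

/-- The polytope defined by a family `𝒰` of pairwise disjoint sets (with `∑_{i∈U} z_i = 1`),
a laminar family `ℒ` with integral lower/upper bounds `a_L ≤ ∑_{i∈L} z_i ≤ b_L`,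
box constraints `z ∈ [0,1]^F`, and the cardinality constraint `∑_i z_i = k`, is integral:
every point of the polytope is a convex combination of its 0/1 points. -/
theorem laminar_polytope_integral {α : Type*} [Fintype α] [DecidableEq α]
    (𝒰 : Finset (Finset α))
    (hdisj : ∀ U ∈ 𝒰, ∀ U' ∈ 𝒰, U ≠ U' → U ∩ U' = ∅)
    (ℒ : Finset (Finset α))
    (hlam : ∀ L ∈ ℒ, ∀ L' ∈ ℒ, L ⊆ L' ∨ L' ⊆ L ∨ L ∩ L' = ∅)
    (k : ℕ) (a b : Finset α → ℤ) (hab : ∀ L ∈ ℒ, a L ≤ b L)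
    (z : α → ℝ)
    (hbox : ∀ i : α, 0 ≤ z i ∧ z i ≤ 1)
    (hbundle : ∀ U ∈ 𝒰, ∑ i ∈ U, z i = 1)
    (hlambound : ∀ L ∈ ℒ, (a L : ℝ) ≤ ∑ i ∈ L, z i ∧ ∑ i ∈ L, z i ≤ (b L : ℝ))
    (htotal : ∑ i : α, z i = (k : ℝ)) :
    ∃ (m : ℕ) (w : Fin m → ℝ) (v : Fin m → α → ℝ),
      (∀ p : Fin m, 0 ≤ w p) ∧ (∑ p : Fin m, w p = 1) ∧
      (∀ p : Fin m,
        (∀ i : α, v p i = 0 ∨ v p i = 1) ∧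
        (∀ U ∈ 𝒰, ∑ i ∈ U, v p i = 1) ∧
        (∀ L ∈ ℒ, (a L : ℝ) ≤ ∑ i ∈ L, v p i ∧ ∑ i ∈ L, v p i ≤ (b L : ℝ)) ∧
        (∑ i : α, v p i = (k : ℝ))) ∧
      (∀ i : α, z i = ∑ p : Fin m, w p * v p i) :=
  laminar_polytope_integral_general 𝒰 hdisj ℒ hlam k a b z hbox hbundle hlambound htotal
end

section
/- Let j be a dangerous client with r_j = r and d_max(j) > 0, and let B'_j ⊆ F satisfy B_j ⊆ B'_j ⊆ Ball(j, d_max(j)/10). Suppose μ is a probability distribution over subsets S ⊆ F such that: Pr[i ∈ S] = y_i for every facility i; almost surely |S ∩ B'_j| ∈ {r−1, r} with Pr[|S ∩ B'_j| = r−1] = r − y(B'_j); and almost surely S contains at least r facilities within distance 3·d_max(j) of j. Then the expected connection cost of j, E_μ[sum of the r smallest values among {d(j,i) : i ∈ S}], is at most 46·r·d_av(j). -/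
open scoped BigOperators

/-!
In a scenario `S` the `r` cheapest connections cost at most those to `S ∩ B'`, plus one facility
within `3 d_max(j)` when `|S ∩ B'| = r - 1`. Taking expectations, the cost is at most
`∑_{i ∈ B'} d(j,i) y_i + (r - y(B')) · 3 d_max(j)`.
Facilities closer than `d_max(j)` lie in `F_j`, so `B' ⊆ F_j` and the first term is at most
`∑_{i ∈ F_j} d(j,i) y_i = r d_av(j)`. As `B_j ⊆ B'`, the probability `r - y(B')` is at most the
weight of the facilities of `F_j` farther than `d_max(j)/15`, and by Markov's inequality that
weight times `d_max(j)/15` is again at most `r d_av(j)`; this gives `(1 + 45) r d_av(j)`.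
The identity `r d_av(j) = ∑_{i ∈ F_j} d(j,i) y_i` integrates the quantile function slice by
slice, adding the facilities in order of distance.
-/

open Finset

namespace List

variable {α : Type*} [AddCommMonoid α] [PartialOrder α] [IsOrderedAddMonoid α]

lemma sum_take_cons_le {a : α} {l : List α} (hl : (a :: l).Pairwise (· ≤ ·)) {n : ℕ}
    (hn : n ≤ l.length) : ((a :: l).take n).sum ≤ (l.take n).sum := by
  cases n with
  | zero => simp
  | succ m =>
    rw [take_succ_cons, sum_cons, sum_take_succ l m hn, add_comm]
    exact add_le_add_right ((pairwise_cons.mp hl).1 _ (l.getElem_mem hn)) _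

lemma sum_take_length_le_of_sublist {s l : List α} (h : s <+ l) (hl : l.Pairwise (· ≤ ·)) :
    (l.take s.length).sum ≤ s.sum := by
  induction h with
  | slnil => simp
  | cons a h ih =>
    exact (sum_take_cons_le hl h.length_le).trans (ih (pairwise_cons.mp hl).2)
  | cons_cons a h ih =>
    simpa only [length_cons, take_succ_cons, sum_cons] using
      add_le_add_right (ih (pairwise_cons.mp hl).2) a

lemma sum_take_length_le_of_subperm {s l : List α} (h : s <+~ l) (hl : l.Pairwise (· ≤ ·)) :
    (l.take s.length).sum ≤ s.sum := by
  obtain ⟨s', hperm, hsub⟩ := h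
  simpa only [hperm.length_eq, hperm.sum_eq] using sum_take_length_le_of_sublist hsub hl

end List

section WeightedQuantile

variable {α : Type*} {d y : α → ℝ} {A : Finset α} {x D : ℝ}

noncomputable def weightBelow (d y : α → ℝ) (A : Finset α) (D : ℝ) : ℝ :=
  ∑ i ∈ A.filter (fun i => d i ≤ D), y i

/-- `FracSol.q s j` is `weightedQuantile (dist j) s.y (s.Fj j)` by definition. -/
noncomputable def weightedQuantile (d y : α → ℝ) (A : Finset α) (x : ℝ) : ℝ :=
  sInf {D : ℝ | x ≤ weightBelow d y A D}

lemma weightBelow_nonneg (hy : ∀ i ∈ A, 0 ≤ y i) (D : ℝ) : 0 ≤ weightBelow d y A D :=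
  sum_nonneg fun i hi => hy i (filter_subset _ _ hi)

lemma weightBelow_eq_sum (hD : ∀ i ∈ A, d i ≤ D) : weightBelow d y A D = ∑ i ∈ A, y i := by
  rw [weightBelow, filter_true_of_mem hD]

lemma weightBelow_insert [DecidableEq α] {a : α} (ha : a ∉ A) (D : ℝ) :
    weightBelow d y (insert a A) D = weightBelow d y A D + if d a ≤ D then y a else 0 := by
  unfold weightBelow
  split_ifs with h
  · rw [filter_insert, if_pos h, sum_insert (fun h' => ha (mem_filter.mp h').1), add_comm]
  · rw [filter_insert, if_neg h, add_zero]

lemma nonneg_of_le_weightBelow (hd : ∀ i ∈ A, 0 ≤ d i) (hx : 0 < x)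
    (h : x ≤ weightBelow d y A D) : 0 ≤ D := by
  by_contra! hD
  have : A.filter (fun i => d i ≤ D) = ∅ :=
    filter_false_of_mem fun i hi => not_le.mpr (hD.trans_le (hd i hi))
  rw [weightBelow, this, sum_empty] at h
  linarith

lemma weightedQuantile_of_nonpos (hy : ∀ i ∈ A, 0 ≤ y i) (hx : x ≤ 0) :
    weightedQuantile d y A x = 0 := by
  have : {D : ℝ | x ≤ weightBelow d y A D} = Set.univ :=
    Set.eq_univ_of_forall fun D => hx.trans (weightBelow_nonneg hy D)
  rw [weightedQuantile, this, Real.sInf_univ]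

lemma weightedQuantile_nonneg (hy : ∀ i ∈ A, 0 ≤ y i) (hd : ∀ i ∈ A, 0 ≤ d i) (x : ℝ) :
    0 ≤ weightedQuantile d y A x := by
  rcases le_or_gt x 0 with hx | hx
  · rw [weightedQuantile_of_nonpos hy hx]
  · exact Real.sInf_nonneg fun D hD => nonneg_of_le_weightBelow hd hx hD

lemma weightedQuantile_le (hd : ∀ i ∈ A, 0 ≤ d i) (hx : 0 < x)
    (hD : x ≤ weightBelow d y A D) : weightedQuantile d y A x ≤ D :=
  csInf_le ⟨0, fun _ hD' => nonneg_of_le_weightBelow hd hx hD'⟩ hD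

lemma weightedQuantile_monotoneOn (hy : ∀ i ∈ A, 0 ≤ y i) (hd : ∀ i ∈ A, 0 ≤ d i) :
    MonotoneOn (weightedQuantile d y A) (Set.Iic (∑ i ∈ A, y i)) := by
  intro x _ x' hx' hxx'
  rcases le_or_gt x 0 with hx | hx
  · rw [weightedQuantile_of_nonpos hy hx]
    exact weightedQuantile_nonneg hy hd x'
  obtain ⟨D, hD⟩ := (A.image d).bddAbove
  have hmax : ∀ i ∈ A, d i ≤ D := fun i hi => hD (mem_coe.mpr (mem_image_of_mem d hi))
  refine csInf_le_csInf ⟨0, fun _ hD' => nonneg_of_le_weightBelow hd hx hD'⟩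
    ⟨D, ?_⟩ fun _ hD' => hxx'.trans hD'
  rw [Set.mem_ofPred_eq, weightBelow_eq_sum hmax]
  exact hx'

section Insert

variable [DecidableEq α] {a : α}

lemma weightedQuantile_insert_of_le (hya : 0 ≤ y a) (ha : a ∉ A)
    (hmax : ∀ i ∈ A, d i ≤ d a) (hx : x ≤ ∑ i ∈ A, y i) :
    weightedQuantile d y (insert a A) x = weightedQuantile d y A x := by
  unfold weightedQuantile
  congr 1
  ext D
  simp only [Set.mem_ofPred_eq, weightBelow_insert ha]
  split_ifs with h
  · have hA : weightBelow d y A D = ∑ i ∈ A, y i :=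
      weightBelow_eq_sum fun i hi => (hmax i hi).trans h
    constructor <;> intro <;> linarith
  · rw [add_zero]

lemma weightedQuantile_insert_of_lt (hy : ∀ i ∈ A, 0 ≤ y i) (ha : a ∉ A)
    (hmax : ∀ i ∈ A, d i ≤ d a) (hx₁ : ∑ i ∈ A, y i < x) (hx₂ : x ≤ ∑ i ∈ A, y i + y a) :
    weightedQuantile d y (insert a A) x = d a := by
  suffices {D : ℝ | x ≤ weightBelow d y (insert a A) D} = Set.Ici (d a) by
    rw [weightedQuantile, this, csInf_Ici]
  ext D
  simp only [Set.mem_ofPred_eq, Set.mem_Ici, weightBelow_insert ha]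
  split_ifs with h
  · rw [weightBelow_eq_sum fun i hi => (hmax i hi).trans h]
    exact iff_of_true hx₂ h
  · have : weightBelow d y A D ≤ ∑ i ∈ A, y i :=
      sum_le_sum_of_subset_of_nonneg (filter_subset _ _)
        fun i hi _ => hy i hi
    exact iff_of_false (by linarith) h

end Insert

lemma integral_weightedQuantile (hy : ∀ i ∈ A, 0 ≤ y i) (hd : ∀ i ∈ A, 0 ≤ d i) :
    ∫ x in (0 : ℝ)..(∑ i ∈ A, y i), weightedQuantile d y A x = ∑ i ∈ A, d i * y i := by
  classical
  induction A using Finset.induction_on_max_value d with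
  | empty => simp
  | insert a A ha hmax ih =>
    have hyA : ∀ i ∈ A, 0 ≤ y i := fun i hi => hy i (mem_insert_of_mem hi)
    have hya : 0 ≤ y a := hy a (mem_insert_self a A)
    have hV : 0 ≤ ∑ i ∈ A, y i := sum_nonneg hyA
    have hint : ∀ u v, 0 ≤ u → u ≤ v → v ≤ ∑ i ∈ insert a A, y i →
        IntervalIntegrable (weightedQuantile d y (insert a A)) MeasureTheory.volume u v :=
      fun u v hu huv hv => ((weightedQuantile_monotoneOn hy hd).mono
        (by rw [Set.uIcc_of_le huv]; exact fun t ht => ht.2.trans hv)).intervalIntegrable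
    have hVa : ∑ i ∈ insert a A, y i = ∑ i ∈ A, y i + y a := by rw [sum_insert ha, add_comm]
    rw [hVa] at hint
    rw [hVa, ← intervalIntegral.integral_add_adjacent_intervals
      (hint 0 _ le_rfl hV (by linarith)) (hint _ _ hV (by linarith) le_rfl)]
    have hlow : ∫ x in (0 : ℝ)..(∑ i ∈ A, y i), weightedQuantile d y (insert a A) x
        = ∑ i ∈ A, d i * y i := by
      rw [← ih hyA fun i hi => hd i (mem_insert_of_mem hi)]
      refine intervalIntegral.integral_congr fun x hx => ?_
      rw [Set.uIcc_of_le hV] at hx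
      exact weightedQuantile_insert_of_le hya ha hmax hx.2
    have htop : ∫ x in (∑ i ∈ A, y i)..(∑ i ∈ A, y i + y a), weightedQuantile d y (insert a A) x
        = d a * y a := by
      rw [intervalIntegral.integral_congr_ae (g := fun _ => d a) (MeasureTheory.ae_of_all _
        fun x hx => ?_), intervalIntegral.integral_const, smul_eq_mul]
      · ring
      rw [Set.uIoc_of_le (by linarith)] at hx
      exact weightedQuantile_insert_of_lt hyA ha hmax hx.1 hx.2
    rw [hlow, htop, sum_insert ha, add_comm]

end WeightedQuantile

lemma mul_sum_filter_lt_le_sum_mul {α : Type*} {d y : α → ℝ} {A : Finset α}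
    (hy : ∀ i ∈ A, 0 ≤ y i) (hd : ∀ i ∈ A, 0 ≤ d i) (L : ℝ) :
    L * ∑ i ∈ A.filter (fun i => L < d i), y i ≤ ∑ i ∈ A, d i * y i := by
  rw [mul_sum]
  calc ∑ i ∈ A.filter (fun i => L < d i), L * y i
      ≤ ∑ i ∈ A.filter (fun i => L < d i), d i * y i := by
        refine sum_le_sum fun i hi => ?_
        obtain ⟨hiA, hLi⟩ := mem_filter.mp hi
        exact mul_le_mul_of_nonneg_right hLi.le (hy i hiA)
    _ ≤ ∑ i ∈ A, d i * y i :=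
        sum_le_sum_of_subset_of_nonneg (filter_subset _ _)
          fun i hi _ => mul_nonneg (hd i hi) (hy i hi)

lemma sum_mul_sum_inter {α β : Type*} [DecidableEq α] [CommSemiring β] (𝒮 : Finset (Finset α))
    (μ : Finset α → β) (B : Finset α) (f : α → β) :
    ∑ S ∈ 𝒮, μ S * ∑ i ∈ S ∩ B, f i = ∑ i ∈ B, f i * ∑ S ∈ 𝒮.filter (fun S => i ∈ S), μ S := by
  simp only [mul_sum, sum_filter, inter_comm _ B, ← filter_mem_eq_inter]
  rw [sum_comm]
  refine sum_congr rfl fun i _ => sum_congr rfl fun S _ => ?_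
  split_ifs <;> simp [mul_comm]

namespace FracSol

variable {X : Type*} [MetricSpace X]

lemma kSmallestSum_le_sum (j : X) {S T : Finset X} {r : ℕ} (hT : T ⊆ S) (hcard : T.card = r) :
    kSmallestSum j S r ≤ ∑ i ∈ T, dist j i := by
  set M : Multiset ℝ := S.val.map fun i => dist j i
  set N : Multiset ℝ := T.val.map fun i => dist j i
  have hsub : (N.sort (· ≤ ·)).Subperm (M.sort (· ≤ ·)) := by
    rw [← Multiset.coe_le, Multiset.sort_eq, Multiset.sort_eq]
    exact Multiset.map_le_map (val_le_iff.mpr hT)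
  have hlen : (N.sort (· ≤ ·)).length = r := by
    rw [Multiset.length_sort, Multiset.card_map, card_val, hcard]
  calc kSmallestSum j S r = ((M.sort (· ≤ ·)).take (N.sort (· ≤ ·)).length).sum := by
        rw [hlen]; rfl
    _ ≤ (N.sort (· ≤ ·)).sum :=
        List.sum_take_length_le_of_subperm hsub (Multiset.pairwise_sort _ _)
    _ = ∑ i ∈ T, dist j i := by rw [← Multiset.sum_coe, Multiset.sort_eq]; rfl

lemma kSmallestSum_le_sum_inter_add [DecidableEq X] (j : X) {S B : Finset X} {r : ℕ} {R : ℝ}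
    (hr : 1 ≤ r) (hcard : (S ∩ B).card = r - 1 ∨ (S ∩ B).card = r)
    (hnear : r ≤ (S.filter (fun i => dist j i ≤ R)).card) :
    kSmallestSum j S r ≤ ∑ i ∈ S ∩ B, dist j i + if (S ∩ B).card = r - 1 then R else 0 := by
  rcases hcard with hc | hc
  · rw [if_pos hc]
    obtain ⟨i₀, hi₀, hi₀B⟩ : ∃ i₀ ∈ S.filter (fun i => dist j i ≤ R), i₀ ∉ S ∩ B :=
      not_subset.mp fun hsub => by have := card_le_card hsub; omega
    obtain ⟨hi₀S, hi₀R⟩ := mem_filter.mp hi₀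
    have hT : insert i₀ (S ∩ B) ⊆ S := insert_subset hi₀S inter_subset_left
    have hTcard : (insert i₀ (S ∩ B)).card = r := by rw [card_insert_of_notMem hi₀B, hc]; omega
    calc kSmallestSum j S r ≤ ∑ i ∈ insert i₀ (S ∩ B), dist j i := kSmallestSum_le_sum j hT hTcard
      _ ≤ ∑ i ∈ S ∩ B, dist j i + R := by rw [sum_insert hi₀B]; linarith
  · rw [if_neg (by omega), add_zero]
    exact kSmallestSum_le_sum j inter_subset_left hc

lemma expected_kSmallestSum_le [DecidableEq X] (j : X) (𝒮 : Finset (Finset X))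
    (μ : Finset X → ℝ) (hμ : ∀ S, 0 ≤ μ S) (B : Finset X) {r : ℕ} {R : ℝ} (hr : 1 ≤ r)
    (hcard : ∀ S, μ S ≠ 0 → (S ∩ B).card = r - 1 ∨ (S ∩ B).card = r)
    (hnear : ∀ S, μ S ≠ 0 → r ≤ (S.filter (fun i => dist j i ≤ R)).card) :
    ∑ S ∈ 𝒮, μ S * kSmallestSum j S r ≤
      ∑ i ∈ B, dist j i * ∑ S ∈ 𝒮.filter (fun S => i ∈ S), μ S +
        (∑ S ∈ 𝒮.filter (fun S => (S ∩ B).card = r - 1), μ S) * R := by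
  rw [← sum_mul_sum_inter, sum_filter, sum_mul, ← sum_add_distrib]
  refine sum_le_sum fun S _ => ?_
  by_cases hS : μ S = 0
  · simp [hS]
  calc μ S * kSmallestSum j S r
      ≤ μ S * (∑ i ∈ S ∩ B, dist j i + if (S ∩ B).card = r - 1 then R else 0) :=
        mul_le_mul_of_nonneg_left
          (kSmallestSum_le_sum_inter_add j hr (hcard S hS) (hnear S hS)) (hμ S)
    _ = _ := by split_ifs <;> ring

variable (s : FracSol X) {j : X}

lemma ball_subset_Fj (hj : j ∈ s.C) {L : ℝ} (hL : L < s.dmax j) : s.ball j L ⊆ s.Fj j := by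
  intro i hi
  obtain ⟨hiF, hiL⟩ := mem_filter.mp hi
  by_contra hni
  have hr : (0 : ℝ) < s.req j := by exact_mod_cast s.req_pos j hj
  have hdmax : s.dmax j ≤ dist j i := by
    refine weightedQuantile_le (fun _ _ => dist_nonneg) hr ?_
    rw [weightBelow_eq_sum fun i' hi' => s.Fj_closest j hj i' hi' i hiF hni, s.Fj_vol j hj]
  rw [dist_comm] at hiL
  linarith

lemma req_mul_dav (hj : j ∈ s.C) :
    (s.req j : ℝ) * s.dav j = ∑ i ∈ s.Fj j, dist j i * s.y i := by
  have hr : (s.req j : ℝ) ≠ 0 := by exact_mod_cast (s.req_pos j hj).ne'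
  have hy : ∀ i ∈ s.Fj j, 0 ≤ s.y i := fun i hi => (s.y_pos i (s.Fj_sub j hj hi)).le
  rw [dav, ← mul_assoc, mul_one_div_cancel hr, one_mul, ← s.Fj_vol j hj]
  exact integral_weightedQuantile hy fun _ _ => dist_nonneg

lemma req_sub_vol_mul_le (hj : j ∈ s.C) {B : Finset X} {L : ℝ} (hL : 0 ≤ L)
    (hB : s.ball j L ⊆ B) (hBF : B ⊆ s.F) :
    (s.req j - s.vol B) * L ≤ ∑ i ∈ s.Fj j, dist j i * s.y i := by
  have hy : ∀ i ∈ s.Fj j, 0 ≤ s.y i := fun i hi => (s.y_pos i (s.Fj_sub j hj hi)).le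
  have hnear : ∑ i ∈ (s.Fj j).filter (fun i => ¬ L < dist j i), s.y i ≤ s.vol B := by
    refine sum_le_sum_of_subset_of_nonneg (fun i hi => hB ?_) fun i hi _ => (s.y_pos i (hBF hi)).le
    obtain ⟨hiFj, hiL⟩ := mem_filter.mp hi
    exact mem_filter.mpr ⟨s.Fj_sub j hj hiFj, by rw [dist_comm]; exact not_lt.mp hiL⟩
  have hsplit := sum_filter_add_sum_filter_not (s.Fj j) (fun i => L < dist j i) s.y
  rw [s.Fj_vol j hj] at hsplit
  calc (s.req j - s.vol B) * L ≤ L * ∑ i ∈ (s.Fj j).filter (fun i => L < dist j i), s.y i := by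
        rw [mul_comm]; exact mul_le_mul_of_nonneg_left (by linarith) hL
    _ ≤ ∑ i ∈ s.Fj j, dist j i * s.y i := mul_sum_filter_lt_le_sum_mul hy (fun _ _ => dist_nonneg) L

end FracSol

open FracSol in
theorem expected_cost_dangerous_client_general {X : Type*} [MetricSpace X] [DecidableEq X]
    (s : FracSol X) (j : X) (hj : j ∈ s.C) (r : ℕ) (hr : s.req j = r)
    (hpos : 0 < s.dmax j)
    (B' : Finset X) (hB1 : s.Bset j ⊆ B') (hB2 : B' ⊆ s.ball j (s.dmax j / 10))
    (μ : Finset X → ℝ) (hμ0 : ∀ S : Finset X, 0 ≤ μ S)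
    (hmarg : ∀ i ∈ s.F, ∑ S ∈ s.F.powerset.filter (fun S => i ∈ S), μ S = s.y i)
    (hcard : ∀ S : Finset X, μ S ≠ 0 → (S ∩ B').card = r - 1 ∨ (S ∩ B').card = r)
    (hprob : ∑ S ∈ s.F.powerset.filter (fun S => (S ∩ B').card = r - 1), μ S
      = (r : ℝ) - s.vol B')
    (hfar : ∀ S : Finset X, μ S ≠ 0 →
      r ≤ (S.filter (fun i => dist j i ≤ 3 * s.dmax j)).card) :
    ∑ S ∈ s.F.powerset, μ S * kSmallestSum j S r ≤ 46 * r * s.dav j := by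
  have hB'F : B' ⊆ s.F := hB2.trans (filter_subset _ _)
  have hB'Fj : B' ⊆ s.Fj j := hB2.trans (s.ball_subset_Fj hj (by linarith))
  have hcost := expected_kSmallestSum_le j s.F.powerset μ hμ0 B' (hr ▸ s.req_pos j hj) hcard hfar
  have hB'marg : ∑ i ∈ B', dist j i * ∑ S ∈ s.F.powerset.filter (fun S => i ∈ S), μ S
      = ∑ i ∈ B', dist j i * s.y i := sum_congr rfl fun i hi => by rw [hmarg i (hB'F hi)]
  rw [hprob, hB'marg] at hcost
  have hinner : ∑ i ∈ B', dist j i * s.y i ≤ ∑ i ∈ s.Fj j, dist j i * s.y i :=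
    sum_le_sum_of_subset_of_nonneg hB'Fj
      fun i hi _ => mul_nonneg dist_nonneg (s.y_pos i (s.Fj_sub j hj hi)).le
  have houter := s.req_sub_vol_mul_le hj (by linarith) hB1 hB'F
  rw [← s.req_mul_dav hj, hr] at houter hinner
  linarith

open FracSol in
/-- Lemma 7 of the paper: for a dangerous client `j` with `B_j ⊆ B'_j ⊆ Ball(j, d_max(j)/10)`,
given a distribution `μ` over subsets of `F` with marginals `y` that almost surely opens
`r-1` or `r` facilities in `B'_j` (with `Pr[r-1 open] = r - y(B'_j)`) and almost surely has at
least `r` facilities within distance `3 d_max(j)` of `j`, the expected connection cost of `j`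
is at most `46 r d_av(j)`. -/
theorem expected_cost_dangerous_client {X : Type*} [MetricSpace X] [DecidableEq X]
    (s : FracSol X) (j : X) (hj : j ∈ s.C) (r : ℕ) (hr : s.req j = r)
    (hd : s.Dangerous j) (hpos : 0 < s.dmax j)
    (B' : Finset X) (hB1 : s.Bset j ⊆ B') (hB2 : B' ⊆ s.ball j (s.dmax j / 10))
    (μ : Finset X → ℝ) (hμ0 : ∀ S : Finset X, 0 ≤ μ S)
    (hμsupp : ∀ S : Finset X, μ S ≠ 0 → S ⊆ s.F)
    (hμ1 : ∑ S ∈ s.F.powerset, μ S = 1)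
    (hmarg : ∀ i ∈ s.F, ∑ S ∈ s.F.powerset.filter (fun S => i ∈ S), μ S = s.y i)
    (hcard : ∀ S : Finset X, μ S ≠ 0 → (S ∩ B').card = r - 1 ∨ (S ∩ B').card = r)
    (hprob : ∑ S ∈ s.F.powerset.filter (fun S => (S ∩ B').card = r - 1), μ S
      = (r : ℝ) - s.vol B')
    (hfar : ∀ S : Finset X, μ S ≠ 0 →
      r ≤ (S.filter (fun i => dist j i ≤ 3 * s.dmax j)).card) :
    ∑ S ∈ s.F.powerset, μ S * kSmallestSum j S r ≤ 46 * r * s.dav j :=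
  expected_cost_dangerous_client_general s j hj r hr hpos B' hB1 hB2 μ hμ0 hmarg hcard hprob hfar
end

section
/- Consider an FTMed instance in which all points lie on the real line, i.e., F ∪ C ⊆ ℝ and d(a,b) = |a − b|. Then the LP relaxation always has an integral optimal solution: for every feasible fractional solution (x,y) of the LP relaxation, there exists a set S ⊆ F with |S| ≤ k and |S| ≥ r_j for all j such that ∑_{j∈C} (sum of the r_j smallest values among {d(j,i) : i ∈ S}) ≤ ∑_{j∈C}∑_{i∈F} d(i,j)·x_{ij}. -/
open scoped BigOperators

/-- A fault-tolerant k-median instance: facilities `F` and clients `C` in a metric space,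
requirements `req j ≥ 1` for clients, and a budget `k ≥ max_j req j`. -/
structure FTMedInstance (X : Type*) [MetricSpace X] where
  F : Finset X
  C : Finset X
  req : X → ℕ
  k : ℕ
  req_pos : ∀ j ∈ C, 0 < req j
  req_le_k : ∀ j ∈ C, req j ≤ k

namespace FTMedInstance

variable {X : Type*} [MetricSpace X]

/-- Sum of the `r` smallest values among the multiset `{d(j,i) : i ∈ S}`. -/
noncomputable def kSmallestSum (j : X) (S : Finset X) (r : ℕ) : ℝ :=
  (((S.val.map fun i => dist j i).sort (· ≤ ·)).take r).sum

/-- Cost of the integral solution `S`: each client is served by its `req j` closest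
facilities of `S`. -/
noncomputable def cost (I : FTMedInstance X) (S : Finset X) : ℝ :=
  ∑ j ∈ I.C, kSmallestSum j S (I.req j)

/-- Feasibility for the natural LP relaxation of fault-tolerant k-median. -/
def LPFeasible (I : FTMedInstance X) (x : X → X → ℝ) (y : X → ℝ) : Prop :=
  (∀ i ∈ I.F, ∀ j ∈ I.C, 0 ≤ x i j ∧ x i j ≤ 1) ∧
  (∀ i ∈ I.F, 0 ≤ y i ∧ y i ≤ 1) ∧
  (∀ i ∈ I.F, ∀ j ∈ I.C, x i j ≤ y i) ∧
  (∀ j ∈ I.C, ∑ i ∈ I.F, x i j = (I.req j : ℝ)) ∧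
  (∑ i ∈ I.F, y i ≤ (I.k : ℝ))

/-- Objective value of the LP relaxation. -/
noncomputable def LPObj (I : FTMedInstance X) (x : X → X → ℝ) : ℝ :=
  ∑ j ∈ I.C, ∑ i ∈ I.F, dist i j * x i j

end FTMedInstance

/-!
Sort the facilities as `p 0 < p 1 < ⋯` and lay their opening values `y` end to end on
`(0, ∑ y]`, each facility owning a cell of length `y ≤ 1`. For a shift `θ ∈ (0, 1]`, the grid
points `θ, θ + 1, …` in `(0, ∑ y] ⊆ (0, k]` fall into pairwise distinct cells, so the facilities
they hit form a solution of size at most `k`, and any window `(a, a + r]` holds exactly `r` of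
the grid points. For each client `j`, the distance `|j - p t|` is valley-shaped in `t`, and an
Abel summation yields a window of length `r_j` over which the integral of the distance from `j`
to the facility of the cell is at most the LP cost of `j`. Averaged over `θ`, the cost of serving
`j` by the grid points in its window is exactly that integral, so some `θ` does no worse than the
LP.
-/

open Finset MeasureTheory

theorem List.Sublist.sum_take_le_sum {α : Type*} [AddCommMonoid α] [PartialOrder α]
    [IsOrderedAddMonoid α] {l l' : List α} (h : l'.Sublist l) (hl : l.Pairwise (· ≤ ·)) :
    (l.take l'.length).sum ≤ l'.sum := by
  induction h with
  | slnil => simp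
  | @cons l' l a h ih =>
    cases l' with
    | nil => simp
    | cons b M =>
      have hM : M.length < l.length := by simpa using h.length_le
      have ha : a ≤ l[M.length] := (List.pairwise_cons.mp hl).1 _ (List.getElem_mem hM)
      have ih := ih hl.of_cons
      rw [List.length_cons, List.sum_take_succ _ _ hM] at ih
      rw [List.length_cons, List.take_succ_cons, List.sum_cons, add_comm]
      exact (add_le_add_right ha _).trans ih
  | @cons_cons l' l a h ih =>
    rw [List.length_cons, List.take_succ_cons, List.sum_cons, List.sum_cons]
    exact add_le_add_right (ih hl.of_cons) a

namespace FTMedInstance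

lemma kSmallestSum_card_le_sum {X : Type*} [MetricSpace X] {S T : Finset X} (hT : T ⊆ S)
    (j : X) : kSmallestSum j S #T ≤ ∑ i ∈ T, dist j i := by
  set L := (S.val.map fun i => dist j i).sort (· ≤ ·)
  set L' := (T.val.map fun i => dist j i).sort (· ≤ ·)
  have hsub : L'.Subperm L := Multiset.coe_le.mp <| by
    rw [Multiset.sort_eq, Multiset.sort_eq]
    exact Multiset.map_le_map (val_le_iff.mpr hT)
  have hlen : L'.length = #T := by simp [L']
  have hsum : L'.sum = ∑ i ∈ T, dist j i := by
    rw [← Multiset.sum_coe, Multiset.sort_eq]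
    rfl
  rw [kSmallestSum, ← hlen, ← hsum]
  exact (List.sublist_of_subperm_of_pairwise hsub (Multiset.pairwise_sort _ _)
    (Multiset.pairwise_sort _ _)).sum_take_le_sum (Multiset.pairwise_sort _ _)

end FTMedInstance

theorem Finset.exists_strictMonoOn_sum_eq {α M : Type*} [LinearOrder α] [Nonempty α]
    [AddCommMonoid M] (F : Finset α) :
    ∃ p : ℕ → α, StrictMonoOn p (Set.Iio #F) ∧ (∀ t < #F, p t ∈ F) ∧
      ∀ f : α → M, ∑ i ∈ F, f i = ∑ t ∈ range #F, f (p t) := by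
  classical
  let p : ℕ → α := fun t =>
    if h : t < #F then F.orderEmbOfFin rfl ⟨t, h⟩ else Classical.arbitrary α
  have hp : ∀ t (h : t < #F), p t = F.orderEmbOfFin rfl ⟨t, h⟩ := fun t h => dif_pos h
  refine ⟨p, fun s hs t ht hst => ?_, fun t ht => hp t ht ▸ F.orderEmbOfFin_mem rfl _,
    fun f => ?_⟩
  · rw [hp s hs, hp t ht]
    exact (F.orderEmbOfFin rfl).strictMono hst
  · rw [← Fin.sum_univ_eq_sum_range, ← F.sum_coe_sort, ← (F.orderIsoOfFin rfl).sum_comp]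
    refine Finset.sum_congr rfl fun t _ => ?_
    rw [hp t t.2]
    rfl

namespace FTMedLine

variable {n : ℕ} {y : ℕ → ℝ} {u v : ℝ}

/-- Lay the weights `y 0, …, y (n - 1)` end to end on `(0, ∑ t < n, y t]`, the `t`-th one
occupying the cell `(∑ s < t, y s, ∑ s ≤ t, y s]`; then `u` lies in the cell of index
`cellIndex n y u`. -/
noncomputable def cellIndex (n : ℕ) (y : ℕ → ℝ) (u : ℝ) : ℕ :=
  #{t ∈ range n | ∑ s ∈ range (t + 1), y s < u}

lemma cellIndex_le : cellIndex n y u ≤ n :=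
  (card_filter_le _ _).trans (card_range n).le

lemma monotone_cellIndex : Monotone (cellIndex n y) := fun _ _ huv =>
  card_le_card fun _ ht => by
    rw [mem_filter] at ht ⊢
    exact ⟨ht.1, ht.2.trans_le huv⟩

lemma measurable_cellIndex : Measurable (cellIndex n y) :=
  monotone_cellIndex.measurable

lemma monotoneOn_sum_range (hy : ∀ t < n, 0 ≤ y t) :
    MonotoneOn (fun s => ∑ t ∈ range s, y t) (Set.Iic n) := fun _ _ _ hs' hss' =>
  sum_le_sum_of_subset_of_nonneg (range_subset_range.mpr hss') fun t ht _ =>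
    hy t ((mem_range.mp ht).trans_le hs')

lemma cellIndex_eq (hy : ∀ t < n, 0 ≤ y t) {t : ℕ} (ht : t < n)
    (hu : u ∈ Set.Ioc (∑ s ∈ range t, y s) (∑ s ∈ range (t + 1), y s)) : cellIndex n y u = t := by
  have hmono := monotoneOn_sum_range hy
  suffices {s ∈ range n | ∑ i ∈ range (s + 1), y i < u} = range t by
    rw [cellIndex, this, card_range]
  ext s
  simp only [mem_filter, mem_range]
  constructor
  · rintro ⟨hs, hsu⟩
    by_contra! hts
    have := hmono (Set.mem_Iic.mpr ht) (Set.mem_Iic.mpr hs) (by omega : t + 1 ≤ s + 1)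
    linarith [hu.2]
  · intro hst
    exact ⟨hst.trans ht, (hmono (Set.mem_Iic.mpr (by omega)) (Set.mem_Iic.mpr ht.le)
      hst).trans_lt hu.1⟩

lemma exists_mem_Ioc_sum_range (hu : 0 < u) (hun : u ≤ ∑ t ∈ range n, y t) :
    ∃ t < n, u ∈ Set.Ioc (∑ s ∈ range t, y s) (∑ s ∈ range (t + 1), y s) := by
  classical
  have hn : n ≠ 0 := by rintro rfl; simp at hun; linarith
  have hex : ∃ t, u ≤ ∑ s ∈ range (t + 1), y s := ⟨n - 1, by rwa [Nat.sub_add_cancel (by omega)]⟩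
  refine ⟨Nat.find hex, ?_, ?_, Nat.find_spec hex⟩
  · have := Nat.find_min' hex (m := n - 1) (by rwa [Nat.sub_add_cancel (by omega)])
    omega
  · rcases Nat.eq_zero_or_pos (Nat.find hex) with h0 | hpos
    · simpa [h0] using hu
    · have := Nat.find_min hex (m := Nat.find hex - 1) (by omega)
      rwa [not_le, Nat.sub_add_cancel hpos] at this

lemma cellIndex_spec (hy : ∀ t < n, 0 ≤ y t) (hu : 0 < u) (hun : u ≤ ∑ t ∈ range n, y t) :
    cellIndex n y u < n ∧ u ∈ Set.Ioc (∑ s ∈ range (cellIndex n y u), y s)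
      (∑ s ∈ range (cellIndex n y u + 1), y s) := by
  obtain ⟨t, ht, htu⟩ := exists_mem_Ioc_sum_range hu hun
  rw [cellIndex_eq hy ht htu]
  exact ⟨ht, htu⟩

lemma cellIndex_lt_cellIndex (hy : ∀ t < n, 0 ≤ y t) (hy1 : ∀ t < n, y t ≤ 1) (hu : 0 < u)
    (huv : u + 1 ≤ v) (hvn : v ≤ ∑ t ∈ range n, y t) : cellIndex n y u < cellIndex n y v := by
  refine (monotone_cellIndex (by linarith)).lt_of_ne fun heq => ?_
  obtain ⟨hlt, hu', -⟩ := cellIndex_spec hy hu (by linarith)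
  obtain ⟨-, -, hv'⟩ := cellIndex_spec hy (by linarith) hvn
  rw [← heq, sum_range_succ] at hv'
  linarith [hy1 _ hlt]

lemma intervalIntegrable_comp_cellIndex (d : ℕ → ℝ) (α β : ℝ) :
    IntervalIntegrable (fun u => d (cellIndex n y u)) volume α β := by
  refine intervalIntegrable_iff.mpr <| Measure.integrableOn_of_bounded
    (M := ∑ t ∈ range (n + 1), |d t|) measure_Ioc_lt_top.ne
    (measurable_from_nat.comp measurable_cellIndex).aestronglyMeasurable
    (ae_of_all _ fun u => ?_)
  exact single_le_sum (f := fun t => |d t|) (fun _ _ => abs_nonneg _)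
    (mem_range.mpr (Nat.lt_succ_of_le cellIndex_le))

lemma integral_comp_cellIndex (hy : ∀ t < n, 0 ≤ y t) (d : ℕ → ℝ) {α β : ℝ} (hα : 0 ≤ α)
    (hαβ : α ≤ β) (hβ : β ≤ ∑ t ∈ range n, y t) :
    ∫ u in α..β, d (cellIndex n y u) = ∑ t ∈ range n, d t *
      (max α (min β (∑ s ∈ range (t + 1), y s)) - max α (min β (∑ s ∈ range t, y s))) := by
  set E : ℕ → ℝ := fun s => max α (min β (∑ i ∈ range s, y i))
  have hE0 : E 0 = α := by simp [E, hα]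
  have hEn : E n = β := by simp [E, hβ, hαβ]
  have hcell : ∀ t < n, ∫ u in E t..E (t + 1), d (cellIndex n y u) = d t * (E (t + 1) - E t) := by
    intro t ht
    have hle : E t ≤ E (t + 1) := max_le_max le_rfl <| min_le_min le_rfl <|
      monotoneOn_sum_range hy (Set.mem_Iic.mpr (by omega)) (Set.mem_Iic.mpr ht) t.le_succ
    rw [intervalIntegral.integral_congr_ae (g := fun _ => d t) (ae_of_all _ fun u hu => ?_),
      intervalIntegral.integral_const, smul_eq_mul, mul_comm]
    rw [Set.uIoc_of_le hle] at hu
    have hαu : α < u := (le_max_left _ _).trans_lt hu.1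
    have hβu : u ≤ β := hu.2.trans (max_le hαβ (min_le_left _ _))
    refine congrArg d (cellIndex_eq hy ht ⟨?_, ?_⟩)
    · exact (min_lt_iff.mp ((le_max_right _ _).trans_lt hu.1)).resolve_left hβu.not_gt
    · exact ((le_max_iff.mp hu.2).resolve_left hαu.not_ge).trans (min_le_right _ _)
  calc ∫ u in α..β, d (cellIndex n y u) = ∫ u in E 0..E n, d (cellIndex n y u) := by
        rw [hE0, hEn]
    _ = ∑ t ∈ range n, ∫ u in E t..E (t + 1), d (cellIndex n y u) :=
        (intervalIntegral.sum_integral_adjacent_intervals fun _ _ =>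
          intervalIntegrable_comp_cellIndex d _ _).symm
    _ = _ := sum_congr rfl fun t ht => hcell t (mem_range.mp ht)

lemma sum_range_mul_sub {R : Type*} [CommRing R] (d G : ℕ → R) (n : ℕ) :
    ∑ t ∈ range n, d t * (G (t + 1) - G t) =
      ∑ t ∈ range n, (d t - d (t + 1)) * G (t + 1) + d n * G n - d 0 * G 0 := by
  induction n with
  | zero => simp
  | succ n ih => rw [sum_range_succ, sum_range_succ, ih]; ring

lemma sum_mul_sub_nonneg_of_valley {d G : ℕ → ℝ} {b n : ℕ} (hG0 : G 0 = 0) (hGn : G n = 0)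
    (hGl : ∀ s ≤ b, 0 ≤ G s) (hGr : ∀ s, b ≤ s → s ≤ n → G s ≤ 0)
    (hdl : AntitoneOn d (Set.Iio b)) (hdr : MonotoneOn d (Set.Ico b n)) :
    0 ≤ ∑ t ∈ range n, d t * (G (t + 1) - G t) := by
  rw [sum_range_mul_sub, hG0, hGn, mul_zero, mul_zero, add_zero, sub_zero]
  refine sum_nonneg fun t ht => ?_
  rw [mem_range] at ht
  rcases lt_trichotomy (t + 1) b with htb | htb | htb
  · exact mul_nonneg (sub_nonneg.mpr (hdl (Set.mem_Iio.mpr (by omega)) htb t.le_succ))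
      (hGl _ htb.le)
  · rw [le_antisymm (hGr _ htb.ge (by omega)) (hGl _ htb.le), mul_zero]
  · rcases (Nat.succ_le_of_lt ht).eq_or_lt with hn | hn
    · rw [show t + 1 = n from hn, hGn, mul_zero]
    · exact mul_nonneg_of_nonpos_of_nonpos
        (sub_nonpos.mpr (hdr ⟨by omega, by omega⟩ ⟨by omega, hn⟩ t.le_succ)) (hGr _ htb.le hn.le)

theorem exists_window_integral_le (hy : ∀ t < n, 0 ≤ y t) {x : ℕ → ℝ} (hx : ∀ t < n, 0 ≤ x t)
    (hxy : ∀ t < n, x t ≤ y t) {d : ℕ → ℝ} {b : ℕ} (hb : b ≤ n) (hdl : AntitoneOn d (Set.Iio b))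
    (hdr : MonotoneOn d (Set.Ico b n)) :
    ∃ a, 0 ≤ a ∧ a + ∑ t ∈ range n, x t ≤ ∑ t ∈ range n, y t ∧
      ∫ u in a..a + ∑ t ∈ range n, x t, d (cellIndex n y u) ≤ ∑ t ∈ range n, d t * x t := by
  set X : ℕ → ℝ := fun s => ∑ t ∈ range s, x t
  set Y : ℕ → ℝ := fun s => ∑ t ∈ range s, y t
  -- The window takes from the cells left of the bottom `b` exactly the mass that `x` puts there.
  set a := Y b - X b
  have hX : MonotoneOn X (Set.Iic n) := monotoneOn_sum_range hx
  have hX0 : ∀ s ≤ n, 0 ≤ X s := fun s hs =>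
    hX (Set.mem_Iic.mpr (Nat.zero_le n)) (Set.mem_Iic.mpr hs) (Nat.zero_le s)
  have hZ : MonotoneOn (fun s => Y s - X s) (Set.Iic n) := by
    simpa only [Y, X, ← sum_sub_distrib] using
      monotoneOn_sum_range (y := fun t => y t - x t) fun t ht => sub_nonneg.mpr (hxy t ht)
  have ha : 0 ≤ a := by
    have := hZ (Set.mem_Iic.mpr (Nat.zero_le n)) (Set.mem_Iic.mpr hb) (Nat.zero_le b)
    simp only [Y, X, sum_range_zero, sub_zero] at this
    linarith
  have har : a + X n ≤ Y n := by
    have := hZ (Set.mem_Iic.mpr hb) (Set.mem_Iic.mpr le_rfl) hb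
    simp only at this
    linarith
  refine ⟨a, ha, har, ?_⟩
  rw [integral_comp_cellIndex hy d ha (by linarith [hX0 n le_rfl]) har]
  set E : ℕ → ℝ := fun s => max a (min (a + X n) (Y s))
  have hE : ∑ t ∈ range n, d t * (X (t + 1) + a - E (t + 1) - (X t + a - E t)) =
      ∑ t ∈ range n, d t * x t - ∑ t ∈ range n, d t * (E (t + 1) - E t) := by
    rw [← sum_sub_distrib]
    refine sum_congr rfl fun t _ => ?_
    simp only [X, sum_range_succ]
    ring
  have hvalley := sum_mul_sub_nonneg_of_valley (G := fun s => X s + a - E s) (b := b) ?_ ?_ ?_ ?_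
    hdl hdr
  · linarith
  · simp [E, X, Y, max_eq_left ((min_le_right _ _).trans ha)]
  · simp only [E, min_eq_left har, max_eq_right (le_add_of_nonneg_right (hX0 n le_rfl))]
    ring
  · intro s hs
    have := hZ (Set.mem_Iic.mpr (hs.trans hb)) (Set.mem_Iic.mpr hb) hs
    simp only at this
    exact sub_nonneg.mpr (max_le (by linarith [hX0 s (hs.trans hb)])
      ((min_le_right _ _).trans (by linarith)))
  · intro s hs hsn
    have hYX := hZ (Set.mem_Iic.mpr hb) (Set.mem_Iic.mpr hsn) hs
    have hXs := hX (Set.mem_Iic.mpr hsn) (Set.mem_Iic.mpr le_rfl) hsn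
    simp only at hYX
    exact sub_nonpos.mpr (le_max_of_le_right (le_min (by linarith) (by linarith)))

lemma exists_antitoneOn_monotoneOn_dist {p : ℕ → ℝ} (hp : MonotoneOn p (Set.Iio n)) (j : ℝ) :
    ∃ b ≤ n, AntitoneOn (fun t => dist j (p t)) (Set.Iio b) ∧
      MonotoneOn (fun t => dist j (p t)) (Set.Ico b n) := by
  classical
  have hex : ∃ b, n ≤ b ∨ j ≤ p b := ⟨n, Or.inl le_rfl⟩
  set b := Nat.find hex
  have hbn : b ≤ n := Nat.find_min' hex (Or.inl le_rfl)
  have hleft : ∀ t < b, p t < j ∧ t < n := fun t ht => by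
    simpa [not_or, and_comm] using Nat.find_min hex ht
  have hright : ∀ t, b ≤ t → t < n → j ≤ p t := fun t hbt htn =>
    ((Nat.find_spec hex).resolve_left (by omega)).trans
      (hp (Set.mem_Iio.mpr (by omega)) htn hbt)
  refine ⟨b, hbn, fun s hs t ht hst => ?_, fun s hs t ht hst => ?_⟩
  · obtain ⟨hpt, htn⟩ := hleft t ht
    have := hp (Set.mem_Iio.mpr (hst.trans_lt htn)) htn hst
    simp only [Real.dist_eq, abs_of_nonneg (sub_nonneg.mpr hpt.le),
      abs_of_nonneg (sub_nonneg.mpr (this.trans hpt.le))]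
    linarith
  · have hps := hright s hs.1 hs.2
    have := hp hs.2 ht.2 hst
    simp only [Real.dist_eq, abs_of_nonpos (sub_nonpos.mpr hps),
      abs_of_nonpos (sub_nonpos.mpr (hps.trans this))]
    linarith

theorem exists_window_integral_dist_le {p : ℕ → ℝ} (hp : MonotoneOn p (Set.Iio n))
    (hy : ∀ t < n, 0 ≤ y t) {x : ℕ → ℝ} (hx : ∀ t < n, 0 ≤ x t) (hxy : ∀ t < n, x t ≤ y t)
    (j : ℝ) : ∃ a, 0 ≤ a ∧ a + ∑ t ∈ range n, x t ≤ ∑ t ∈ range n, y t ∧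
      ∫ u in a..a + ∑ t ∈ range n, x t, dist j (p (cellIndex n y u)) ≤
        ∑ t ∈ range n, dist j (p t) * x t := by
  obtain ⟨b, hb, hdl, hdr⟩ := exists_antitoneOn_monotoneOn_dist hp j
  exact exists_window_integral_le hy hx hxy hb hdl hdr

lemma integral_sum_range_add {f : ℝ → ℝ} {K : ℕ} (hf : IntervalIntegrable f volume 0 K) :
    ∫ θ in (0:ℝ)..1, ∑ m ∈ range K, f (m + θ) = ∫ u in (0:ℝ)..K, f u := by
  have hf' : ∀ m < K, IntervalIntegrable f volume m (m + 1) := fun m hm =>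
    hf.mono_set (Set.uIcc_subset_uIcc (by simp; omega)
      (Set.mem_uIcc_of_le (by positivity) (by exact_mod_cast hm)))
  rw [intervalIntegral.integral_finsetSum fun m hm => by
    simpa using (hf' m (mem_range.mp hm)).comp_add_left (m : ℝ)]
  simpa using intervalIntegral.sum_integral_adjacent_intervals (a := fun m : ℕ => (m : ℝ))
    fun m hm => by simpa using hf' m hm

lemma exists_mem_Ioc_le_integral {G : ℝ → ℝ} (hG : IntervalIntegrable G volume 0 1) :
    ∃ θ ∈ Set.Ioc (0:ℝ) 1, G θ ≤ ∫ θ in (0:ℝ)..1, G θ := by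
  have hvol : volume (Set.Ioc (0:ℝ) 1) = 1 := by simp
  obtain ⟨θ, hθ, hle⟩ := exists_le_setAverage (by simp [hvol]) (by simp [hvol])
    ((intervalIntegrable_iff_integrableOn_Ioc_of_le zero_le_one).mp hG)
  refine ⟨θ, hθ, hle.trans_eq ?_⟩
  rw [setAverage_eq, intervalIntegral.integral_of_le zero_le_one]
  simp

theorem exists_shift_sum_indicator_le {ι : Type*} (C : Finset ι) (K : ℕ) {g : ι → ℝ → ℝ}
    {a b : ι → ℝ} (hg : ∀ j ∈ C, IntervalIntegrable (g j) volume (a j) (b j))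
    (ha : ∀ j ∈ C, 0 ≤ a j) (hab : ∀ j ∈ C, a j ≤ b j) (hb : ∀ j ∈ C, b j ≤ K) :
    ∃ θ ∈ Set.Ioc (0:ℝ) 1, ∑ j ∈ C, ∑ m ∈ range K, (Set.Ioc (a j) (b j)).indicator (g j) (m + θ)
      ≤ ∑ j ∈ C, ∫ u in a j..b j, g j u := by
  have hf : ∀ j ∈ C, Integrable ((Set.Ioc (a j) (b j)).indicator (g j)) := fun j hj =>
    ((intervalIntegrable_iff_integrableOn_Ioc_of_le (hab j hj)).mp (hg j hj)).integrable_indicator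
      measurableSet_Ioc
  have hshift : ∀ j ∈ C, ∀ m : ℕ, IntervalIntegrable
      (fun θ => (Set.Ioc (a j) (b j)).indicator (g j) (m + θ)) volume 0 1 := fun j hj m => by
    simpa using ((hf j hj).intervalIntegrable (a := m) (b := m + 1)).comp_add_left (m : ℝ)
  have hint : ∀ j ∈ C, ∫ θ in (0:ℝ)..1, ∑ m ∈ range K,
      (Set.Ioc (a j) (b j)).indicator (g j) (m + θ) = ∫ u in a j..b j, g j u := fun j hj => by
    rw [integral_sum_range_add (hf j hj).intervalIntegrable,
      intervalIntegral.integral_of_le (Nat.cast_nonneg K), setIntegral_indicator measurableSet_Ioc,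
      Set.inter_eq_right.mpr (Set.Ioc_subset_Ioc (ha j hj) (hb j hj)),
      intervalIntegral.integral_of_le (hab j hj)]
  obtain ⟨θ, hθ, hle⟩ := exists_mem_Ioc_le_integral (G := fun θ => ∑ j ∈ C, ∑ m ∈ range K,
    (Set.Ioc (a j) (b j)).indicator (g j) (m + θ))
    (by simpa only [sum_fn] using IntervalIntegrable.sum C fun j hj =>
      IntervalIntegrable.sum (range K) fun m _ => hshift j hj m)
  refine ⟨θ, hθ, hle.trans_eq ?_⟩
  rw [intervalIntegral.integral_finsetSum fun j hj => by
    simpa only [sum_fn] using IntervalIntegrable.sum (range K) fun m _ => hshift j hj m]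
  exact sum_congr rfl hint

lemma card_filter_range_add_mem_Ioc {θ a : ℝ} {r K : ℕ} (hθ : θ ∈ Set.Ioc (0:ℝ) 1) (ha : 0 ≤ a)
    (hK : a + r ≤ K) : #{m ∈ range K | ((m : ℕ) : ℝ) + θ ∈ Set.Ioc a (a + r)} = r := by
  set c := ⌊a - θ + 1⌋₊
  have h0 : 0 ≤ a - θ + 1 := by linarith [hθ.2]
  suffices {m ∈ range K | ((m : ℕ) : ℝ) + θ ∈ Set.Ioc a (a + r)} = Ico c (c + r) by
    rw [this, Nat.card_Ico, Nat.add_sub_cancel_left]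
  ext m
  have hc : c ≤ m ↔ a < m + θ := by
    rw [← Nat.lt_add_one_iff, Nat.floor_lt h0]
    push_cast
    constructor <;> intro <;> linarith
  have hcr : m < c + r ↔ m + θ ≤ a + r := by
    rw [Nat.lt_iff_add_one_le, ← Nat.floor_add_natCast h0, Nat.le_floor_iff (by positivity)]
    push_cast
    constructor <;> intro <;> linarith
  simp only [mem_filter, mem_range, Set.mem_Ioc, mem_Ico, hc, hcr]
  refine ⟨fun h => h.2, fun h => ⟨?_, h⟩⟩
  have : (m : ℝ) < K := by linarith [hθ.1]
  exact_mod_cast this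

noncomputable def gridPoints (p : ℕ → ℝ) (n : ℕ) (y : ℕ → ℝ) (K : ℕ) (θ : ℝ) : Finset ℝ :=
  {m ∈ range K | ((m : ℕ) : ℝ) + θ ≤ ∑ t ∈ range n, y t}.image
    fun m : ℕ => p (cellIndex n y (m + θ))

variable {p : ℕ → ℝ} {K : ℕ} {θ : ℝ}

lemma gridPoints_subset {F : Finset ℝ} (hpF : ∀ t < n, p t ∈ F) (hy : ∀ t < n, 0 ≤ y t)
    (hθ : 0 < θ) : gridPoints p n y K θ ⊆ F := by
  intro i hi
  obtain ⟨m, hm, rfl⟩ := mem_image.mp hi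
  exact hpF _ (cellIndex_spec hy (add_pos_of_nonneg_of_pos (Nat.cast_nonneg _) hθ)
    (mem_filter.mp hm).2).1

lemma card_gridPoints_le : #(gridPoints p n y K θ) ≤ K :=
  card_image_le.trans <| (card_filter_le _ _).trans (card_range K).le

lemma exists_subset_gridPoints (hp : StrictMonoOn p (Set.Iio n)) (hy : ∀ t < n, 0 ≤ y t)
    (hy1 : ∀ t < n, y t ≤ 1) (hθ : θ ∈ Set.Ioc (0:ℝ) 1) (hK : ∑ t ∈ range n, y t ≤ K) (q : ℝ)
    {a : ℝ} {r : ℕ} (ha : 0 ≤ a) (har : a + r ≤ ∑ t ∈ range n, y t) :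
    ∃ T ⊆ gridPoints p n y K θ, #T = r ∧ ∑ i ∈ T, dist q i = ∑ m ∈ range K,
      (Set.Ioc a (a + r)).indicator (fun u => dist q (p (cellIndex n y u))) (m + θ) := by
  classical
  set D := {m ∈ range K | ((m : ℕ) : ℝ) + θ ≤ ∑ t ∈ range n, y t}
  set M := {m ∈ range K | ((m : ℕ) : ℝ) + θ ∈ Set.Ioc a (a + r)}
  have hMD : M ⊆ D := fun m hm => by
    rw [mem_filter] at hm ⊢
    exact ⟨hm.1, hm.2.2.trans har⟩
  have hinj : Set.InjOn (fun m : ℕ => p (cellIndex n y (m + θ))) (D : Set ℕ) := by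
    have hD : ∀ m ∈ D, 0 < (m : ℝ) + θ ∧ (m : ℝ) + θ ≤ ∑ t ∈ range n, y t := fun m hm =>
      ⟨add_pos_of_nonneg_of_pos (Nat.cast_nonneg _) hθ.1, (mem_filter.mp hm).2⟩
    refine StrictMonoOn.injOn fun m₁ hm₁ m₂ hm₂ h => hp (cellIndex_spec hy (hD m₁ hm₁).1
      (hD m₁ hm₁).2).1 (cellIndex_spec hy (hD m₂ hm₂).1 (hD m₂ hm₂).2).1 ?_
    refine cellIndex_lt_cellIndex hy hy1 (hD m₁ hm₁).1 ?_ (hD m₂ hm₂).2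
    have : (m₁ : ℝ) + 1 ≤ m₂ := by exact_mod_cast h
    linarith
  refine ⟨M.image fun m : ℕ => p (cellIndex n y (m + θ)), image_subset_image hMD, ?_, ?_⟩
  · rw [card_image_of_injOn (hinj.mono hMD), card_filter_range_add_mem_Ioc hθ ha (har.trans hK)]
  · rw [sum_image (hinj.mono hMD), sum_filter]
    simp only [Set.indicator_apply]

lemma kSmallestSum_gridPoints_le (hp : StrictMonoOn p (Set.Iio n)) (hy : ∀ t < n, 0 ≤ y t)
    (hy1 : ∀ t < n, y t ≤ 1) (hθ : θ ∈ Set.Ioc (0:ℝ) 1) (hK : ∑ t ∈ range n, y t ≤ K) (q : ℝ)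
    {a : ℝ} {r : ℕ} (ha : 0 ≤ a) (har : a + r ≤ ∑ t ∈ range n, y t) :
    r ≤ #(gridPoints p n y K θ) ∧
      FTMedInstance.kSmallestSum q (gridPoints p n y K θ) r ≤ ∑ m ∈ range K,
        (Set.Ioc a (a + r)).indicator (fun u => dist q (p (cellIndex n y u))) (m + θ) := by
  obtain ⟨T, hTS, hTcard, hTsum⟩ := exists_subset_gridPoints hp hy hy1 hθ hK q ha har
  subst hTcard
  exact ⟨card_le_card hTS, (FTMedInstance.kSmallestSum_card_le_sum hTS q).trans_eq hTsum⟩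

end FTMedLine

open FTMedLine in
/-- FTMed on a line metric: the LP relaxation always has an integral optimal solution.
For every feasible fractional solution there is an integral solution of no greater cost. -/
theorem ftmed_line_integral_optimal
    (I : FTMedInstance ℝ) (x : ℝ → ℝ → ℝ) (y : ℝ → ℝ) (hfeas : I.LPFeasible x y) :
    ∃ S : Finset ℝ, S ⊆ I.F ∧ (∀ j ∈ I.C, I.req j ≤ S.card) ∧ S.card ≤ I.k ∧
      I.cost S ≤ I.LPObj x := by
  obtain ⟨hx01, hy01, hxy, hxr, hyk⟩ := hfeas
  obtain ⟨p, hp, hpF, hsum⟩ := I.F.exists_strictMonoOn_sum_eq (M := ℝ)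
  set n := #I.F
  set w : ℕ → ℝ := fun t => y (p t)
  have hw0 : ∀ t < n, 0 ≤ w t := fun t ht => (hy01 _ (hpF t ht)).1
  have hw1 : ∀ t < n, w t ≤ 1 := fun t ht => (hy01 _ (hpF t ht)).2
  have hwk : ∑ t ∈ range n, w t ≤ I.k := hsum y ▸ hyk
  have hwin : ∀ j ∈ I.C, ∃ a, 0 ≤ a ∧ a + I.req j ≤ ∑ t ∈ range n, w t ∧
      ∫ u in a..a + I.req j, dist j (p (cellIndex n w u)) ≤ ∑ i ∈ I.F, dist i j * x i j := by
    intro j hj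
    rw [← hxr j hj, hsum, hsum]
    simpa only [dist_comm j] using exists_window_integral_dist_le hp.monotoneOn hw0
      (fun t ht => (hx01 _ (hpF t ht) j hj).1) (fun t ht => hxy _ (hpF t ht) j hj) j
  choose! a ha0 haw hint using hwin
  obtain ⟨θ, hθ, hθle⟩ := exists_shift_sum_indicator_le I.C I.k
    (fun j _ => intervalIntegrable_comp_cellIndex (fun t => dist j (p t)) _ _) ha0
    (fun j _ => le_add_of_nonneg_right (Nat.cast_nonneg (I.req j))) fun j hj => (haw j hj).trans hwk
  have hround := fun j hj => kSmallestSum_gridPoints_le hp hw0 hw1 hθ hwk j (ha0 j hj) (haw j hj)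
  refine ⟨gridPoints p n w I.k θ, gridPoints_subset hpF hw0 hθ.1, fun j hj => (hround j hj).1,
    card_gridPoints_le, ?_⟩
  exact ((sum_le_sum fun j hj => (hround j hj).2).trans hθle).trans (sum_le_sum hint)
end

section
/- Consider an FTMed instance in which the metric d on F ∪ C is an ultrametric, i.e., d(a,c) ≤ max{d(a,b), d(b,c)} for all points a,b,c (this is the metric induced on the leaves of a hierarchically well separated tree with all facilities and clients located at leaves). Then the LP relaxation always has an integral optimal solution: for every feasible fractional solution (x,y) of the LP relaxation, there exists a set S ⊆ F with |S| ≤ k and |S| ≥ r_j for all j such that ∑_{j∈C} (sum of the r_j smallest values among {d(j,i) : i ∈ S}) ≤ ∑_{j∈C}∑_{i∈F} d(i,j)·x_{ij}. -/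
open scoped BigOperators

/-!
Enumerate the facilities in lexicographic order of their vectors of distances to all facilities.
In an ultrametric this makes the trace on `F` of every closed ball an interval of the enumeration.
Round `y` by systematic sampling along the enumeration: for an offset `t`, take the `m`-th facility
when the cumulative mass plus `t` crosses an integer. Every interval `B` then receives `⌊y(B)⌋` or
`⌈y(B)⌉` facilities, `y(B)` on average over `t`; a finitely supported distribution of `t` suffices.
Hence for a client with requirement `r`, the averaged number of its `r` nearest chosen facilities
inside any ball is at least `min(r, y(B)) ≥ x(B)`, and by the layer-cake formula its averaged
service cost is at most its LP cost. Some offset therefore costs at most the LP value.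
-/

open Finset

namespace Finset

variable {α : Type*} [LinearOrder α]

noncomputable def nextOr (s : Finset α) (top a : α) : α :=
  if h : {b ∈ s | a < b}.Nonempty then {b ∈ s | a < b}.min' h else top

theorem lt_nextOr {s : Finset α} {top a : α} (ha : a < top) : a < s.nextOr top a := by
  unfold nextOr
  split_ifs with h
  · exact (mem_filter.mp ({b ∈ s | a < b}.min'_mem h)).2
  · exact ha

theorem le_nextOr {s : Finset α} {top a : α} (ha : a ≤ top) : a ≤ s.nextOr top a := by
  unfold nextOr
  split_ifs with h
  · exact (mem_filter.mp ({b ∈ s | a < b}.min'_mem h)).2.le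
  · exact ha

theorem nextOr_insert_of_lt {s : Finset α} {top m a : α} (hma : m < a) :
    (insert m s).nextOr top a = s.nextOr top a := by
  simp only [nextOr, filter_insert, hma.not_gt, if_false]

theorem nextOr_insert_self {s : Finset α} {top m : α} (hm : ∀ b ∈ s, m < b) :
    (insert m s).nextOr top m = if hs : s.Nonempty then s.min' hs else top := by
  have : {b ∈ insert m s | m < b} = s := by
    rw [filter_insert, if_neg (lt_irrefl m), filter_true_of_mem hm]
  simp only [nextOr, this]

theorem sum_nextOr_sub [AddCommGroup α] {s : Finset α} {top a : α} (ha : a ∈ s) :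
    ∑ b ∈ s with a ≤ b, (s.nextOr top b - b) = top - a := by
  classical
  induction s using Finset.induction_on_min generalizing a with
  | empty => simp at ha
  | insert m s hm ih =>
    have hnext : ∀ b ∈ s, (insert m s).nextOr top b = s.nextOr top b :=
      fun b hb => nextOr_insert_of_lt (hm b hb)
    rcases mem_insert.mp ha with rfl | ha
    · rw [filter_true_of_mem fun b hb => (mem_insert.mp hb).elim ge_of_eq fun hb => (hm b hb).le,
        sum_insert fun h => lt_irrefl _ (hm _ h), sum_congr rfl fun b hb => by rw [hnext b hb],
        nextOr_insert_self hm]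
      split_ifs with hs
      · have h := ih (s.min'_mem hs)
        rw [filter_true_of_mem fun b hb => s.min'_le b hb] at h
        rw [h]
        abel
      · simp [not_nonempty_iff_eq_empty.mp hs]
    · rw [filter_insert, if_neg (hm a ha).not_ge, ← ih ha]
      exact sum_congr rfl fun b hb => by rw [hnext b (mem_filter.mp hb).1]

variable {ι κ : Type*}

theorem sum_mul_eq_layercake [CommRing α] {s : Finset ι} {V : Finset α} {f p : ι → α} (top : α)
    (hf : ∀ i ∈ s, f i ∈ V) :
    ∑ i ∈ s, f i * p i =
      top * ∑ i ∈ s, p i - ∑ b ∈ V, (V.nextOr top b - b) * ∑ i ∈ s with f i ≤ b, p i := by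
  classical
  calc ∑ i ∈ s, f i * p i
      = ∑ i ∈ s, (top - ∑ b ∈ V, if f i ≤ b then V.nextOr top b - b else 0) * p i := by
        refine sum_congr rfl fun i hi => ?_
        rw [← sum_filter, sum_nextOr_sub (hf i hi), sub_sub_cancel]
    _ = top * ∑ i ∈ s, p i -
          ∑ b ∈ V, ∑ i ∈ s, if f i ≤ b then (V.nextOr top b - b) * p i else 0 := by
        simp only [sub_mul, sum_sub_distrib, mul_sum, sum_mul, ite_mul, zero_mul]
        rw [sum_comm]
    _ = _ := by simp only [mul_sum, sum_filter, mul_ite, mul_zero]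

theorem sum_mul_le_sum_mul_of_sum_filter_le [CommRing α] [IsOrderedRing α] {s : Finset ι}
    {t : Finset κ} {f : ι → α} {g : κ → α} {p : ι → α} {q : κ → α}
    (hpq : ∑ i ∈ s, p i = ∑ k ∈ t, q k)
    (hcdf : ∀ v, ∑ i ∈ s with f i ≤ v, p i ≤ ∑ k ∈ t with g k ≤ v, q k) :
    ∑ k ∈ t, g k * q k ≤ ∑ i ∈ s, f i * p i := by
  classical
  set V := s.image f ∪ t.image g
  obtain ⟨top, htop⟩ := V.bddAbove
  rw [sum_mul_eq_layercake (V := V) top fun i hi => mem_union_left _ (mem_image_of_mem f hi),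
    sum_mul_eq_layercake (V := V) top fun k hk => mem_union_right _ (mem_image_of_mem g hk), hpq]
  gcongr with b hb
  · exact sub_nonneg.mpr (le_nextOr (htop hb))
  · exact hcdf b

theorem exists_le_of_sum_mul_le [CommRing α] [IsStrictOrderedRing α] {s : Finset ι}
    {w f : ι → α} {B : α} (hw : ∀ i ∈ s, 0 < w i) (hw₁ : ∑ i ∈ s, w i = 1)
    (h : ∑ i ∈ s, w i * f i ≤ B) : ∃ i ∈ s, f i ≤ B := by
  have hs : s.Nonempty := nonempty_of_sum_ne_zero (hw₁.trans_ne one_ne_zero)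
  obtain ⟨i, hi, hle⟩ := exists_le_of_sum_le hs (f := fun i => w i * f i) (g := fun i => w i * B)
    (by rwa [← sum_mul, hw₁, one_mul])
  exact ⟨i, hi, le_of_mul_le_mul_left hle (hw i hi)⟩

end Finset

section Floor

variable {α : Type*} [CommRing α] [LinearOrder α] [IsStrictOrderedRing α] [FloorRing α]

theorem Int.floor_add_eq_ite {a t : α} (ht₀ : 0 ≤ t) (ht₁ : t < 1) :
    ⌊a + t⌋ = if ⌈a⌉ - a ≤ t then ⌈a⌉ else ⌈a⌉ - 1 := by
  have h₁ := Int.le_ceil a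
  have h₂ := Int.ceil_lt_add_one a
  split_ifs with h <;> rw [Int.floor_eq_iff] <;> push_cast <;> constructor <;> linarith

theorem Int.floor_add_sub_floor_eq_ite {c δ : α} (h₀ : 0 ≤ δ) (h₁ : δ ≤ 1) :
    ⌊c + δ⌋ - ⌊c⌋ = if ⌊c⌋ < ⌊c + δ⌋ then 1 else 0 := by
  have hle := Int.floor_le_floor (show c ≤ c + δ by linarith)
  have hle' : ⌊c + δ⌋ ≤ ⌊c⌋ + 1 := by
    rw [← Int.floor_add_one]
    exact Int.floor_le_floor (by linarith)
  split_ifs <;> omega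

theorem Int.le_floor_add_sub_floor_add {a b t : α} {r : ℤ} (h : r ≤ b - a) :
    r ≤ ⌊b + t⌋ - ⌊a + t⌋ := by
  have := Int.floor_le_floor (show a + t + r ≤ b + t by linarith)
  rw [Int.floor_add_intCast] at this
  omega

theorem Int.floor_add_sub_floor_add_le {a b t : α} {r : ℤ} (h : b - a ≤ r) :
    ⌊b + t⌋ - ⌊a + t⌋ ≤ r := by
  have := Int.floor_le_floor (show b + t ≤ a + t + r by linarith)
  rw [Int.floor_add_intCast] at this
  omega

theorem exists_sum_mul_floor_add_eq (A : Finset α) :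
    ∃ (Θ : Finset α) (w : α → α), (∀ t ∈ Θ, 0 < w t) ∧ ∑ t ∈ Θ, w t = 1 ∧
      ∀ a ∈ A, ∑ t ∈ Θ, w t * ⌊a + t⌋ = a := by
  classical
  -- Atoms at `0` and at the points `⌈a⌉ - a ∈ [0, 1)`, each weighted by the gap to the next atom:
  -- `⌊a + t⌋` jumps from `⌈a⌉ - 1` to `⌈a⌉` at `t = ⌈a⌉ - a`.
  set Θ := insert 0 (A.image fun a => (⌈a⌉ : α) - a)
  have hΘ : ∀ t ∈ Θ, 0 ≤ t ∧ t < 1 := by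
    simp only [Θ, mem_insert, mem_image]
    rintro t (rfl | ⟨a, -, rfl⟩)
    · exact ⟨le_rfl, one_pos⟩
    · constructor <;> linarith [Int.le_ceil a, Int.ceil_lt_add_one a]
  have hsum : ∑ t ∈ Θ, (Θ.nextOr 1 t - t) = 1 := by
    have := sum_nextOr_sub (top := (1 : α)) (mem_insert_self 0 _ : (0 : α) ∈ Θ)
    rwa [filter_true_of_mem fun t ht => (hΘ t ht).1, sub_zero] at this
  refine ⟨Θ, fun t => Θ.nextOr 1 t - t, fun t ht => sub_pos.mpr (lt_nextOr (hΘ t ht).2), hsum,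
    fun a ha => ?_⟩
  have hc : (⌈a⌉ : α) - a ∈ Θ := mem_insert_of_mem (mem_image_of_mem _ ha)
  calc ∑ t ∈ Θ, (Θ.nextOr 1 t - t) * (⌊a + t⌋ : α)
      = ∑ t ∈ Θ, ((Θ.nextOr 1 t - t) * (⌈a⌉ - 1) +
          if (⌈a⌉ : α) - a ≤ t then Θ.nextOr 1 t - t else 0) := by
        refine sum_congr rfl fun t ht => ?_
        rw [Int.floor_add_eq_ite (hΘ t ht).1 (hΘ t ht).2]
        split_ifs <;> push_cast <;> ring
    _ = a := by
        rw [sum_add_distrib, ← sum_mul, hsum, ← sum_filter, sum_nextOr_sub hc]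
        ring

end Floor

theorem List.sum_take_eq_sum_range_getD {M : Type*} [AddCommMonoid M] (l : List M) (r : ℕ) :
    (l.take r).sum = ∑ s ∈ Finset.range r, l.getD s 0 := by
  induction l generalizing r with
  | nil => simp
  | cons a l ih => cases r <;> simp [Finset.sum_range_succ', ih, add_comm]

theorem List.countP_eq_card_filter_range {α : Type*} (l : List α) (p : α → Bool) (d : α) :
    l.countP p = #{s ∈ Finset.range l.length | p (l.getD s d)} := by
  induction l with
  | nil => simp
  | cons a l ih =>
    simp only [countP_cons, length_cons, card_filter, Finset.sum_range_succ', getD_cons_succ,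
      getD_cons_zero, ih]

theorem List.min_countP_le_card_filter_range {α : Type*} [LinearOrder α] {l : List α}
    (hl : l.Pairwise (· ≤ ·)) {r : ℕ} (hr : r ≤ l.length) (v d : α) :
    min r (l.countP (· ≤ v)) ≤ #{s ∈ Finset.range r | l.getD s d ≤ v} := by
  rw [countP_eq_card_filter_range _ _ d]
  by_cases h : ∀ s ∈ Finset.range r, l.getD s d ≤ v
  · rw [Finset.filter_true_of_mem h, Finset.card_range]
    exact min_le_left _ _
  push Not at h
  obtain ⟨s₀, hs₀, hv⟩ := h
  rw [Finset.mem_range] at hs₀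
  refine (min_le_right _ _).trans (card_le_card fun s hs => ?_)
  simp only [Finset.mem_filter, Finset.mem_range, decide_eq_true_eq] at hs ⊢
  refine ⟨lt_of_not_ge fun h => hv.not_ge ?_, hs.2⟩
  rw [getD_eq_getElem _ _ (hs₀.trans_le hr)]
  rw [getD_eq_getElem _ _ hs.1] at hs
  exact (pairwise_iff_getElem.mp hl s₀ s _ hs.1 (hs₀.trans_le h)).trans hs.2

theorem Finset.exists_monotone_enum {X β : Type*} [DecidableEq X] [Nonempty X] [LinearOrder β]
    (F : Finset X) (key : X → β) :
    ∃ e : ℕ → X, Set.InjOn e (range #F) ∧ (range #F).image e = F ∧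
      ∀ m₁ m₂, m₁ ≤ m₂ → m₂ < #F → key (e m₁) ≤ key (e m₂) := by
  set L := F.toList.mergeSort fun a b => decide (key a ≤ key b)
  have hperm : L.Perm F.toList := List.mergeSort_perm _ _
  have hsorted : L.Pairwise fun a b => key a ≤ key b := by
    simpa using List.pairwise_mergeSort (le := fun a b => decide (key a ≤ key b))
      (fun a b c hab hbc => by simpa using le_trans (by simpa using hab) (by simpa using hbc))
      (fun a b => by simpa using le_total _ _) F.toList
  rw [← length_toList, ← hperm.length_eq]
  have he : ∀ m (hm : m < L.length), L.getD m (Classical.arbitrary X) = L[m] := fun m hm =>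
    List.getD_eq_getElem _ _ hm
  refine ⟨fun m => L.getD m (Classical.arbitrary X), fun m₁ hm₁ m₂ hm₂ h => ?_, ?_, ?_⟩
  · have hm₁ := mem_range.mp hm₁
    have hm₂ := mem_range.mp hm₂
    simp only [he m₁ hm₁, he m₂ hm₂] at h
    exact (hperm.nodup_iff.mpr F.nodup_toList).getElem_inj_iff.mp h
  · ext a
    simp only [mem_image, mem_range]
    rw [← mem_toList, ← hperm.mem_iff, List.mem_iff_getElem]
    constructor
    · rintro ⟨m, hm, rfl⟩
      exact ⟨m, hm, (he m hm).symm⟩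
    · rintro ⟨m, hm, rfl⟩
      exact ⟨m, hm, he m hm⟩
  · intro m₁ m₂ h₁₂ hm₂
    simp only [he m₁ (h₁₂.trans_lt hm₂), he m₂ hm₂]
    rcases h₁₂.lt_or_eq with h | rfl
    · exact List.pairwise_iff_getElem.mp hsorted m₁ m₂ _ _ h
    · exact le_rfl

theorem Finset.exists_filter_range_eq_Ico {P : ℕ → Prop} [DecidablePred P] {n : ℕ}
    (hP : ∀ m₁ m₂ m₃, m₁ ≤ m₂ → m₂ ≤ m₃ → m₃ < n → P m₁ → P m₃ → P m₂) :
    ∃ a b, a ≤ b ∧ b ≤ n ∧ {m ∈ range n | P m} = Ico a b := by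
  rcases {m ∈ range n | P m}.eq_empty_or_nonempty with h | h
  · exact ⟨0, 0, le_rfl, Nat.zero_le n, by rw [h, Ico_self]⟩
  set M := {m ∈ range n | P m}
  have hmin := mem_filter.mp (M.min'_mem h)
  have hmax := mem_filter.mp (M.max'_mem h)
  refine ⟨M.min' h, M.max' h + 1, (M.min'_le _ (M.max'_mem h)).trans (Nat.le_succ _),
    mem_range.mp hmax.1, ?_⟩
  ext m
  rw [mem_Ico, Nat.lt_succ_iff]
  refine ⟨fun hm => ⟨M.min'_le m hm, M.le_max' m hm⟩, fun ⟨h₁, h₂⟩ => ?_⟩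
  exact mem_filter.mpr ⟨mem_range.mpr (h₂.trans_lt (mem_range.mp hmax.1)),
    hP _ m _ h₁ h₂ (mem_range.mp hmax.1) hmin.2 hmax.2⟩

section Ultrametric

variable {X : Type*} [MetricSpace X]

def UltrametricOn (s : Set X) : Prop :=
  ∀ a ∈ s, ∀ b ∈ s, ∀ c ∈ s, dist a c ≤ max (dist a b) (dist b c)

variable {s : Set X}

theorem UltrametricOn.dist_eq_of_dist_le_of_dist_le (hs : UltrametricOn s) {a b c z : X}
    (ha : a ∈ s) (hb : b ∈ s) (hc : c ∈ s) (hz : z ∈ s) (habc : dist a c < dist a b)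
    (hza : dist z a ≤ dist z b) (hzb : dist z b ≤ dist z c) :
    dist z a = dist z b ∧ dist z b = dist z c := by
  have h₁ := hs a ha z hz b hb
  have h₂ := hs z hz a ha c hc
  rw [dist_comm a z] at h₁
  rcases le_max_iff.mp h₁ with h₁ | h₁ <;> rcases le_max_iff.mp h₂ with h₂ | h₂ <;>
    constructor <;> linarith

theorem UltrametricOn.dist_le_max_of_dist_le (hs : UltrametricOn s) {a b c j : X}
    (ha : a ∈ s) (hb : b ∈ s) (hc : c ∈ s) (hj : j ∈ s) (habc : dist a b ≤ dist a c) :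
    dist j b ≤ max (dist j a) (dist j c) := by
  have h₁ := hs j hj a ha b hb
  have h₂ := hs a ha j hj c hc
  rw [dist_comm a j] at h₂
  rcases le_max_iff.mp h₁ with h₁ | h₁ <;> rcases le_max_iff.mp h₂ with h₂ | h₂ <;>
    simp only [le_max_iff] <;> first | (left; linarith) | (right; linarith)

theorem UltrametricOn.dist_le_dist_of_toLex_le {ι : Type*} [LinearOrder ι] [WellFoundedLT ι]
    (hs : UltrametricOn s) {z : ι → X} (hz : ∀ π, z π ∈ s) {a b c : X} (hb : b ∈ s) (hc : c ∈ s)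
    (haz : a ∈ Set.range z)
    (hab : toLex (fun π => dist (z π) a) ≤ toLex (fun π => dist (z π) b))
    (hbc : toLex (fun π => dist (z π) b) ≤ toLex (fun π => dist (z π) c)) :
    dist a b ≤ dist a c := by
  by_contra! habc
  -- At the first coordinate where the three distance vectors are not all equal, the lexicographic
  -- order gives `d(z, a) ≤ d(z, b) ≤ d(z, c)`, which the ultrametric turns into equalities.
  let Split := {π | ¬(dist (z π) a = dist (z π) b ∧ dist (z π) b = dist (z π) c)}
  obtain ⟨π₀, rfl⟩ := haz
  have hne : Split.Nonempty := ⟨π₀, fun h => by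
    rw [dist_self] at h
    linarith [h.1, dist_nonneg (x := z π₀) (y := c)]⟩
  obtain ⟨π, hπ, hmin⟩ := wellFounded_lt.has_min Split hne
  have hbefore : ∀ π' < π, _ := fun π' h => not_not.mp fun h' => hmin π' h' h
  exact hπ (hs.dist_eq_of_dist_le_of_dist_le (hz π₀) hb hc (hz π) habc
    (Pi.apply_le_of_toLex hab fun π' h => (hbefore π' h).1)
    (Pi.apply_le_of_toLex hbc fun π' h => (hbefore π' h).2))

theorem UltrametricOn.exists_enum_filter_dist_le_eq_image_Ico [DecidableEq X] [Nonempty X]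
    (hs : UltrametricOn s) {F : Finset X} (hF : ↑F ⊆ s) :
    ∃ e : ℕ → X, Set.InjOn e (range #F) ∧ (range #F).image e = F ∧
      ∀ j ∈ s, ∀ v, ∃ a b, a ≤ b ∧ b ≤ #F ∧ {i ∈ F | dist j i ≤ v} = (Ico a b).image e := by
  let z : Fin #F → X := fun π => F.equivFin.symm π
  have hz : ∀ π, z π ∈ s := fun π => hF (F.equivFin.symm π).2
  obtain ⟨e, he, himage, hmono⟩ := F.exists_monotone_enum fun p => toLex fun π => dist (z π) p
  have heF : ∀ m < #F, e m ∈ F := fun m hm => himage ▸ mem_image_of_mem e (mem_range.mpr hm)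
  refine ⟨e, he, himage, fun j hj v => ?_⟩
  obtain ⟨a, b, hab, hb, hIco⟩ := exists_filter_range_eq_Ico (n := #F)
    (P := fun m => dist j (e m) ≤ v) fun m₁ m₂ m₃ h₁₂ h₂₃ hm₃ h₁ h₃ => by
      have hm₂ := h₂₃.trans_lt hm₃
      have hm₁ := h₁₂.trans_lt hm₂
      have hz₁ : e m₁ ∈ Set.range z := ⟨F.equivFin ⟨e m₁, heF m₁ hm₁⟩, by simp [z]⟩
      refine (hs.dist_le_max_of_dist_le (hF (heF m₁ hm₁)) (hF (heF m₂ hm₂)) (hF (heF m₃ hm₃)) hj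
        ?_).trans (max_le h₁ h₃)
      exact hs.dist_le_dist_of_toLex_le hz (hF (heF m₂ hm₂)) (hF (heF m₃ hm₃)) hz₁
        (hmono m₁ m₂ h₁₂ hm₂) (hmono m₂ m₃ h₂₃ hm₃)
  refine ⟨a, b, hab, hb, ?_⟩
  rw [← hIco]
  nth_rw 1 [← himage]
  exact filter_image

end Ultrametric

theorem le_sum_mul_min {ι : Type*} {Θ : Finset ι} {w : ι → ℝ} {N : ι → ℤ} {c z : ℝ} {r : ℤ}
    (hw₁ : ∑ t ∈ Θ, w t = 1) (hN : ∀ t ∈ Θ, ((r : ℝ) ≤ c → r ≤ N t) ∧ (c ≤ r → N t ≤ r))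
    (hmean : ∑ t ∈ Θ, w t * N t = c) (hzc : z ≤ c) (hzr : z ≤ r) :
    z ≤ ∑ t ∈ Θ, w t * (min r (N t) : ℤ) := by
  rcases le_total (r : ℝ) c with h | h
  · rwa [sum_congr rfl fun t ht => by rw [min_eq_left ((hN t ht).1 h)], ← sum_mul, hw₁, one_mul]
  · rwa [sum_congr rfl fun t ht => by rw [min_eq_right ((hN t ht).2 h)], hmean]

section SystematicRounding

variable {X : Type*} {e : ℕ → X} {y : X → ℝ} {n a b : ℕ}

noncomputable def partialMass (e : ℕ → X) (y : X → ℝ) (m : ℕ) : ℝ := ∑ i ∈ range m, y (e i)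

theorem partialMass_succ (m : ℕ) : partialMass e y (m + 1) = partialMass e y m + y (e m) :=
  sum_range_succ _ _

theorem exists_sum_mul_floor_partialMass_add_eq (e : ℕ → X) (y : X → ℝ) (n : ℕ) :
    ∃ (Θ : Finset ℝ) (w : ℝ → ℝ), (∀ t ∈ Θ, 0 < w t) ∧ ∑ t ∈ Θ, w t = 1 ∧
      ∀ m ≤ n, ∑ t ∈ Θ, w t * ⌊partialMass e y m + t⌋ = partialMass e y m := by
  obtain ⟨Θ, w, hw, hw₁, h⟩ := exists_sum_mul_floor_add_eq ((range (n + 1)).image (partialMass e y))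
  exact ⟨Θ, w, hw, hw₁, fun m hm => h _ (mem_image_of_mem _ (mem_range.mpr (Nat.lt_succ_of_le hm)))⟩

theorem card_filter_Ico_floor_lt_floor (hy : ∀ m ∈ Ico a b, 0 ≤ y (e m) ∧ y (e m) ≤ 1)
    (hab : a ≤ b) (t : ℝ) :
    (#{m ∈ Ico a b | ⌊partialMass e y m + t⌋ < ⌊partialMass e y (m + 1) + t⌋} : ℤ) =
      ⌊partialMass e y b + t⌋ - ⌊partialMass e y a + t⌋ := by
  rw [card_filter, ← sum_Ico_sub (fun m => ⌊partialMass e y m + t⌋) hab]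
  push_cast
  refine sum_congr rfl fun m hm => ?_
  rw [partialMass_succ, add_right_comm, Int.floor_add_sub_floor_eq_ite (hy m hm).1 (hy m hm).2]

variable [DecidableEq X]

/-- Systematic sampling along `e` with offset `t`. -/
noncomputable def roundedSet (e : ℕ → X) (y : X → ℝ) (n : ℕ) (t : ℝ) : Finset X :=
  {m ∈ range n | ⌊partialMass e y m + t⌋ < ⌊partialMass e y (m + 1) + t⌋}.image e

theorem roundedSet_subset (t : ℝ) : roundedSet e y n t ⊆ (range n).image e :=
  image_subset_image (filter_subset _ _)

theorem card_roundedSet_inter_image_Ico (he : Set.InjOn e (range n))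
    (hy : ∀ m < n, 0 ≤ y (e m) ∧ y (e m) ≤ 1) (hab : a ≤ b) (hbn : b ≤ n) (t : ℝ) :
    (#(roundedSet e y n t ∩ (Ico a b).image e) : ℤ) =
      ⌊partialMass e y b + t⌋ - ⌊partialMass e y a + t⌋ := by
  have hsub : Ico a b ⊆ range n := fun m hm => mem_range.mpr ((mem_Ico.mp hm).2.trans_le hbn)
  rw [roundedSet, ← image_inter_of_injOn _ _ (he.mono (Set.union_subset
      (coe_subset.mpr (filter_subset _ _)) (coe_subset.mpr hsub))), card_image_of_injOn (he.mono
      (coe_subset.mpr (inter_subset_left.trans (filter_subset _ _)))), filter_inter,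
    inter_eq_right.mpr hsub]
  exact card_filter_Ico_floor_lt_floor (fun m hm => hy m (mem_range.mp (hsub hm))) hab t

theorem sum_image_Ico_eq_partialMass_sub (he : Set.InjOn e (range n)) (hab : a ≤ b)
    (hbn : b ≤ n) : ∑ i ∈ (Ico a b).image e, y i = partialMass e y b - partialMass e y a := by
  have hsub : Ico a b ⊆ range n := fun m hm => mem_range.mpr ((mem_Ico.mp hm).2.trans_le hbn)
  rw [sum_image (he.mono (coe_subset.mpr hsub)), sum_Ico_eq_sub _ hab]
  rfl

theorem card_roundedSet_bounds (he : Set.InjOn e (range n))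
    (hy : ∀ m < n, 0 ≤ y (e m) ∧ y (e m) ≤ 1) (r : ℕ) (t : ℝ) :
    ((r : ℝ) ≤ ∑ i ∈ (range n).image e, y i → r ≤ #(roundedSet e y n t)) ∧
      (∑ i ∈ (range n).image e, y i ≤ r → #(roundedSet e y n t) ≤ r) := by
  have hcard := card_roundedSet_inter_image_Ico he hy (Nat.zero_le n) le_rfl t
  have hmass := sum_image_Ico_eq_partialMass_sub (y := y) he (Nat.zero_le n) le_rfl
  rw [← range_eq_Ico, inter_eq_left.mpr (roundedSet_subset t)] at hcard
  rw [← range_eq_Ico] at hmass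
  constructor <;> intro h
  · have := Int.le_floor_add_sub_floor_add (t := t) (r := r) (h.trans_eq hmass)
    omega
  · have := Int.floor_add_sub_floor_add_le (t := t) (r := r) (hmass ▸ h)
    omega

theorem sum_le_sum_mul_min_card_roundedSet_inter {Θ : Finset ℝ} {w : ℝ → ℝ}
    (he : Set.InjOn e (range n)) (hy : ∀ m < n, 0 ≤ y (e m) ∧ y (e m) ≤ 1)
    (hw₁ : ∑ t ∈ Θ, w t = 1)
    (hwy : ∀ m ≤ n, ∑ t ∈ Θ, w t * ⌊partialMass e y m + t⌋ = partialMass e y m)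
    (hab : a ≤ b) (hbn : b ≤ n) {x : X → ℝ} {r : ℕ} (hxy : ∀ i ∈ (Ico a b).image e, x i ≤ y i)
    (hxr : ∑ i ∈ (Ico a b).image e, x i ≤ r) :
    ∑ i ∈ (Ico a b).image e, x i ≤
      ∑ t ∈ Θ, w t * min r #(roundedSet e y n t ∩ (Ico a b).image e) := by
  have hcard := card_roundedSet_inter_image_Ico he hy hab hbn
  have hmass := sum_image_Ico_eq_partialMass_sub (y := y) he hab hbn
  have key := le_sum_mul_min (N := fun t => (#(roundedSet e y n t ∩ (Ico a b).image e) : ℤ))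
    (r := r) hw₁ (fun t _ => ⟨fun h => ?_, fun h => ?_⟩) ?_ ((sum_le_sum hxy).trans_eq hmass) hxr
  · simpa using key
  · rw [hcard]
    exact Int.le_floor_add_sub_floor_add (by exact_mod_cast h)
  · rw [hcard]
    exact Int.floor_add_sub_floor_add_le (by exact_mod_cast h)
  · simp only [hcard, Int.cast_sub, mul_sub, sum_sub_distrib, hwy b hbn, hwy a (hab.trans hbn)]

end SystematicRounding

namespace FTMedInstance

variable {X : Type*} [MetricSpace X]

theorem kSmallestSum_eq_sum_range (j : X) (S : Finset X) (r : ℕ) :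
    kSmallestSum j S r =
      ∑ s ∈ range r, ((S.val.map fun i => dist j i).sort (· ≤ ·)).getD s 0 :=
  List.sum_take_eq_sum_range_getD _ _

theorem min_card_filter_dist_le (j : X) {S : Finset X} {r : ℕ} (hr : r ≤ #S) (v : ℝ) :
    min r #{i ∈ S | dist j i ≤ v} ≤
      #{s ∈ range r | ((S.val.map fun i => dist j i).sort (· ≤ ·)).getD s 0 ≤ v} := by
  have hcount : ((S.val.map fun i => dist j i).sort (· ≤ ·)).countP (· ≤ v) =
      #{i ∈ S | dist j i ≤ v} := by
    rw [← Multiset.coe_countP, Multiset.sort_eq, Multiset.countP_map]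
    rfl
  rw [← hcount]
  exact List.min_countP_le_card_filter_range (Multiset.pairwise_sort _ _)
    (by rwa [Multiset.length_sort, Multiset.card_map]) v 0

theorem sum_mul_kSmallestSum_le {ι : Type*} {Θ : Finset ι} {w : ι → ℝ} {S : ι → Finset X}
    {F : Finset X} {x : X → ℝ} {j : X} {r : ℕ} (hw : ∀ t ∈ Θ, 0 ≤ w t)
    (hw₁ : ∑ t ∈ Θ, w t = 1) (hr : ∀ t ∈ Θ, r ≤ #(S t)) (hx : ∑ i ∈ F, x i = r)
    (hcdf : ∀ v, ∑ i ∈ F with dist j i ≤ v, x i ≤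
      ∑ t ∈ Θ, w t * min r #{i ∈ S t | dist j i ≤ v}) :
    ∑ t ∈ Θ, w t * kSmallestSum j (S t) r ≤ ∑ i ∈ F, dist j i * x i := by
  classical
  -- Stochastic dominance of `x` by the `r` smallest distances from `j` to the sets `S t`,
  -- weighted by `w t`.
  let g : ι × ℕ → ℝ := fun p => (((S p.1).val.map fun i => dist j i).sort (· ≤ ·)).getD p.2 0
  calc ∑ t ∈ Θ, w t * kSmallestSum j (S t) r
      = ∑ p ∈ Θ ×ˢ range r, g p * w p.1 := by
        simp only [sum_product, kSmallestSum_eq_sum_range, mul_sum, g, mul_comm]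
    _ ≤ ∑ i ∈ F, dist j i * x i := by
        refine sum_mul_le_sum_mul_of_sum_filter_le ?_ fun v => (hcdf v).trans ?_
        · simp only [sum_product, sum_const, card_range, nsmul_eq_mul, hx, ← mul_sum, hw₁,
            mul_one]
        · rw [sum_filter, sum_product]
          refine sum_le_sum fun t ht => ?_
          simp only [← sum_filter, sum_const, nsmul_eq_mul, mul_comm (w t)]
          exact mul_le_mul_of_nonneg_right
            (by exact_mod_cast min_card_filter_dist_le j (hr t ht) v) (hw t ht)

theorem sum_mul_kSmallestSum_roundedSet_le [DecidableEq X] {F : Finset X} {n : ℕ} {e : ℕ → X}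
    {y x : X → ℝ} {Θ : Finset ℝ} {w : ℝ → ℝ} {j : X} {r : ℕ}
    (he : Set.InjOn e (range n)) (himage : (range n).image e = F)
    (hball : ∀ v, ∃ a b, a ≤ b ∧ b ≤ n ∧ {i ∈ F | dist j i ≤ v} = (Ico a b).image e)
    (hy : ∀ m < n, 0 ≤ y (e m) ∧ y (e m) ≤ 1) (hw : ∀ t ∈ Θ, 0 ≤ w t) (hw₁ : ∑ t ∈ Θ, w t = 1)
    (hwy : ∀ m ≤ n, ∑ t ∈ Θ, w t * ⌊partialMass e y m + t⌋ = partialMass e y m)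
    (hx₀ : ∀ i ∈ F, 0 ≤ x i) (hxy : ∀ i ∈ F, x i ≤ y i) (hx : ∑ i ∈ F, x i = r)
    (hr : ∀ t ∈ Θ, r ≤ #(roundedSet e y n t)) :
    ∑ t ∈ Θ, w t * kSmallestSum j (roundedSet e y n t) r ≤ ∑ i ∈ F, dist j i * x i := by
  refine sum_mul_kSmallestSum_le hw hw₁ hr hx fun v => ?_
  obtain ⟨a, b, hab, hbn, hB⟩ := hball v
  have hBF : (Ico a b).image e ⊆ F := hB ▸ filter_subset _ _
  have hfilter : ∀ t, {i ∈ roundedSet e y n t | dist j i ≤ v} =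
      roundedSet e y n t ∩ (Ico a b).image e := fun t => by
    rw [← hB, inter_filter, inter_eq_left.mpr (himage ▸ roundedSet_subset t)]
  simp only [hfilter, hB]
  exact sum_le_sum_mul_min_card_roundedSet_inter he hy hw₁ hwy hab hbn (fun i hi => hxy i (hBF hi))
    ((sum_le_sum_of_subset_of_nonneg hBF fun i hi _ => hx₀ i hi).trans_eq hx)

theorem sum_mul_cost_le_LPObj {ι : Type*} (I : FTMedInstance X) {Θ : Finset ι} {w : ι → ℝ}
    {S : ι → Finset X} {x : X → X → ℝ}
    (h : ∀ j ∈ I.C, ∑ t ∈ Θ, w t * kSmallestSum j (S t) (I.req j) ≤ ∑ i ∈ I.F, dist j i * x i j) :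
    ∑ t ∈ Θ, w t * I.cost (S t) ≤ I.LPObj x := by
  simp only [cost, LPObj, mul_sum, dist_comm _ (_ : X)]
  rw [sum_comm]
  exact sum_le_sum h

end FTMedInstance

/-- FTMed on an ultrametric (the metric induced on the leaves of an HST): the LP relaxation
always has an integral optimal solution.  For every feasible fractional solution there is an
integral solution of no greater cost. -/
theorem ftmed_ultrametric_integral_optimal {X : Type*} [MetricSpace X] [DecidableEq X]
    (I : FTMedInstance X)
    (hultra : ∀ a ∈ I.F ∪ I.C, ∀ b ∈ I.F ∪ I.C, ∀ c ∈ I.F ∪ I.C,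
      dist a c ≤ max (dist a b) (dist b c))
    (x : X → X → ℝ) (y : X → ℝ) (hfeas : I.LPFeasible x y) :
    ∃ S : Finset X, S ⊆ I.F ∧ (∀ j ∈ I.C, I.req j ≤ S.card) ∧ S.card ≤ I.k ∧
      I.cost S ≤ I.LPObj x := by
  obtain ⟨hx01, hy01, hxy, hxsum, hysum⟩ := hfeas
  rcases isEmpty_or_nonempty X with hX | hX
  · exact ⟨∅, by simp [FTMedInstance.cost, FTMedInstance.LPObj, eq_empty_of_isEmpty I.C]⟩
  have hs : UltrametricOn (↑(I.F ∪ I.C) : Set X) := hultra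
  obtain ⟨e, he, himage, hball⟩ := hs.exists_enum_filter_dist_le_eq_image_Ico (F := I.F) (by simp)
  have hy : ∀ m < #I.F, 0 ≤ y (e m) ∧ y (e m) ≤ 1 := fun m hm =>
    hy01 _ (himage ▸ mem_image_of_mem e (mem_range.mpr hm))
  obtain ⟨Θ, w, hw, hw₁, hwy⟩ := exists_sum_mul_floor_partialMass_add_eq e y #I.F
  have hbounds := card_roundedSet_bounds he hy
  rw [himage] at hbounds
  have hr : ∀ t, ∀ j ∈ I.C, I.req j ≤ #(roundedSet e y #I.F t) := fun t j hj =>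
    (hbounds _ t).1 ((hxsum j hj).symm.trans_le (sum_le_sum fun i hi => hxy i hi j hj))
  obtain ⟨t, -, hcost⟩ := exists_le_of_sum_mul_le hw hw₁ (I.sum_mul_cost_le_LPObj fun j hj =>
    FTMedInstance.sum_mul_kSmallestSum_roundedSet_le he himage (hball j (by simp [hj])) hy
      (fun t ht => (hw t ht).le) hw₁ hwy (fun i hi => (hx01 i hi j hj).1)
      (fun i hi => hxy i hi j hj) (hxsum j hj) fun t _ => hr t j hj)
  exact ⟨_, (roundedSet_subset t).trans himage.subset, (hr t · ·), (hbounds _ t).2 hysum, hcost⟩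
end
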